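/- arXiv:math/0610867 — 10 statements merged into one kernel-verified Lean document; each statement's English description precedes it below -/
import Mathlib

section
/- Let k : ℝ → ℝ³ be a continuously differentiable map with period 1, injective on [0,1), with nowhere-vanishing derivative (a smooth knot). Then there exists a natural number N such that for every integer n > N there exist parameters 0 ≤ t₀ < t₁ < ⋯ < t_{n-1} < 1 and a constant c > 0 with ‖k(t_i) − k(t_{i+1})‖ = c for all i = 0, …, n−1 (indices cyclic, t_n = t₀ + 1); i.e., every smooth knot is inscribed by a regular n-gon for all sufficiently large n. -/
set_option maxHeartbeats 2000000

open Set
open scoped RealInnerProductSpace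

/-- The observation of Rawdon and Simon: every smooth knot (C¹, period 1,
injective on `[0,1)`, nowhere-vanishing derivative) is inscribed by a regular
`n`-gon for all sufficiently large `n`: there are
`0 ≤ t₀ < t₁ < ⋯ < t_{n-1} < 1` and `c > 0` with `t_n = t₀ + 1` and
`‖k (t i) - k (t (i+1))‖ = c` for all `i < n`. -/
theorem inscribed_regular_ngon_of_smooth_knot_large_n
    (k : ℝ → EuclideanSpace ℝ (Fin 3))
    (hk : ContDiff ℝ 1 k)
    (hper : ∀ t : ℝ, k (t + 1) = k t)
    (hinj : Set.InjOn k (Set.Ico (0 : ℝ) 1))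
    (hreg : ∀ t : ℝ, deriv k t ≠ 0) :
    ∃ N : ℕ, ∀ n : ℕ, N < n →
      ∃ (t : ℕ → ℝ) (c : ℝ), 0 < c ∧ 0 ≤ t 0 ∧ t (n - 1) < 1 ∧
        t n = t 0 + 1 ∧
        (∀ i < n, t i < t (i + 1)) ∧
        (∀ i < n, ‖k (t i) - k (t (i + 1))‖ = c) := by
  classical
  set K := deriv k with hK
  have hKcont : Continuous K := hk.continuous_deriv le_rfl
  have hkc : Continuous k := hk.continuous
  have hd : ∀ x : ℝ, HasDerivAt k (K x) x := fun x => ((hk.differentiable one_ne_zero) x).hasDerivAt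
  -- deriv is periodic
  have hKper : Function.Periodic K 1 := by
    intro t
    have h : (fun s : ℝ => k (s + 1)) = k := funext hper
    calc K (t + 1) = deriv (fun s => k (s + 1)) t := (deriv_comp_add_const k 1 t).symm
    _ = K t := by rw [h]
  have hfract : ∀ u : ℝ, K u = K (Int.fract u) := by
    intro u
    have h1 : Int.fract u = u - (⌊u⌋ : ℝ) * 1 := by rw [Int.fract]; ring
    rw [h1]
    exact (hKper.sub_int_mul_eq ⌊u⌋).symm
  have hfmem : ∀ u : ℝ, Int.fract u ∈ Icc (0:ℝ) 1 :=
    fun u => ⟨Int.fract_nonneg u, (Int.fract_lt_one u).le⟩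
  obtain ⟨u₀, hu₀, hmin⟩ := isCompact_Icc.exists_isMinOn (nonempty_Icc.2 zero_le_one)
    (hKcont.norm.continuousOn (s := Icc (0:ℝ) 1))
  obtain ⟨u₁, hu₁, hmax⟩ := isCompact_Icc.exists_isMaxOn (nonempty_Icc.2 zero_le_one)
    (hKcont.norm.continuousOn (s := Icc (0:ℝ) 1))
  set m := ‖K u₀‖ with hm'
  set M := ‖K u₁‖ with hM'
  have hm : 0 < m := norm_pos_iff.2 (hreg u₀)
  have hmle : ∀ u, m ≤ ‖K u‖ := by
    intro u; rw [hfract u]; exact hmin (hfmem u)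
  have hMge : ∀ u, ‖K u‖ ≤ M := by
    intro u; rw [hfract u]; exact hmax (hfmem u)
  have hmM : m ≤ M := (hmle u₁)
  have hM : 0 < M := lt_of_lt_of_le hm hmM
  -- uniform continuity of K
  have hucomp := (isCompact_Icc (a := (-1:ℝ)) (b := 2)).uniformContinuousOn_of_continuous
    hKcont.continuousOn
  rw [Metric.uniformContinuousOn_iff] at hucomp
  obtain ⟨δ₀, hδ₀, hδ₀'⟩ := hucomp (m/4) (by positivity)
  set δ := min (δ₀/4) (1/2) with hδdef
  have hδ : 0 < δ := lt_min (by positivity) (by norm_num)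
  have hδ1 : δ ≤ 1/2 := min_le_right _ _
  have hUC : ∀ u v : ℝ, |u - v| ≤ 2*δ → ‖K u - K v‖ ≤ m/4 := by
    intro u v h
    have h2δ : 2*δ ≤ δ₀/2 := by
      have := min_le_left (δ₀/4) (1/2); simp only [hδdef] at *; linarith
    have h2δ1 : 2*δ ≤ 1 := by linarith
    set u' := Int.fract u with hu'
    set v' := v - (⌊u⌋ : ℝ) with hv'
    have huv' : u' - v' = u - v := by rw [hu', hv', Int.fract]; ring
    have hu'mem : u' ∈ Icc (-1:ℝ) 2 := by
      constructor
      · linarith [Int.fract_nonneg u]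
      · linarith [(Int.fract_lt_one u).le]
    have hv'mem : v' ∈ Icc (-1:ℝ) 2 := by
      have h1 : |u' - v'| ≤ 1 := by rw [huv']; linarith
      rw [abs_le] at h1
      constructor
      · linarith [Int.fract_nonneg u]
      · linarith [(Int.fract_lt_one u).le]
    have hKu : K u = K u' := hfract u
    have hKv : K v = K v' := by
      rw [hv']
      exact (hKper.sub_int_mul_eq (x := v) ⌊u⌋).symm.trans (by norm_num)
    rw [hKu, hKv]
    rcases eq_or_lt_of_le (le_refl (0:ℝ)) with _ | _
    · have hdist : dist u' v' < δ₀ := by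
        rw [Real.dist_eq, huv']
        calc |u - v| ≤ 2*δ := h
        _ ≤ δ₀/2 := h2δ
        _ < δ₀ := by linarith
      have := hδ₀' u' hu'mem v' hv'mem hdist
      rw [dist_eq_norm] at this
      linarith
    · have hdist : dist u' v' < δ₀ := by
        rw [Real.dist_eq, huv']
        calc |u - v| ≤ 2*δ := h
        _ ≤ δ₀/2 := h2δ
        _ < δ₀ := by linarith
      have := hδ₀' u' hu'mem v' hv'mem hdist
      rw [dist_eq_norm] at this
      linarith
  have hMVT : ∀ t a b : ℝ, a ≤ b → t - 2*δ ≤ a → b ≤ t + 2*δ →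
      ‖k b - k a - (b - a) • K t‖ ≤ m/4 * (b - a) := by
    intro t a b hab ha hb
    have key := norm_image_sub_le_of_norm_deriv_le_segment'
      (f := fun x => k x - x • K t) (f' := fun x => K x - K t) (a := a) (b := b)
      (fun x hx => (((hd x).sub ((hasDerivAt_id x).smul_const (K t))).congr_deriv
        (by simp)).hasDerivWithinAt)
      (fun x hx => hUC x t (by
        rw [abs_le]
        exact ⟨by linarith [hx.1, hx.2.le], by linarith [hx.1, hx.2.le]⟩))
      b (right_mem_Icc.2 hab)
    have : k b - b • K t - (k a - a • K t) = k b - k a - (b - a) • K t := by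
      rw [sub_smul]; abel
    rwa [this] at key
  have hLip : ∀ a b : ℝ, a ≤ b → ‖k b - k a‖ ≤ M * (b - a) := by
    intro a b hab
    have key := norm_image_sub_le_of_norm_deriv_le_segment' (f := k) (f' := K) (a := a) (b := b)
      (fun x _ => (hd x).hasDerivWithinAt) (fun x _ => hMge x) b (right_mem_Icc.2 hab)
    exact key
  have hlow : ∀ t b : ℝ, t ≤ b → b ≤ t + 2*δ → 3/4 * m * (b - t) ≤ ‖k b - k t‖ := by
    intro t b h1 h2
    have h := hMVT t t b h1 (by linarith) h2
    have h3 : ‖(b - t) • K t‖ - ‖k b - k t - (b - t) • K t‖ ≤ ‖k b - k t‖ := by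
      have := norm_sub_norm_le ((b - t) • K t) ((b - t) • K t - (k b - k t))
      have h4 : (b - t) • K t - ((b - t) • K t - (k b - k t)) = k b - k t := by abel
      rw [h4] at this
      have h5 : ‖(b - t) • K t - (k b - k t)‖ = ‖k b - k t - (b - t) • K t‖ := norm_sub_rev _ _
      linarith
    have h6 : ‖(b - t) • K t‖ = (b - t) * ‖K t‖ := by
      rw [norm_smul, Real.norm_eq_abs, abs_of_nonneg (by linarith)]
    nlinarith [hmle t, norm_nonneg (k b - k t - (b - t) • K t)]
  have hinner : ∀ t a b s : ℝ, t ≤ a → a ≤ b → b ≤ t + 2*δ → t ≤ s → s ≤ t + 2*δ →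
      (b - a) * (s - t) * (m^2/4) ≤ ⟪k b - k a, k s - k t⟫ := by
    intro t a b s hta hab hb hts hs
    set e1 := k b - k a - (b - a) • K t with he1def
    set e2 := k s - k t - (s - t) • K t with he2def
    have he1 : ‖e1‖ ≤ m/4 * (b - a) := hMVT t a b hab (by linarith) hb
    have he2 : ‖e2‖ ≤ m/4 * (s - t) := hMVT t t s hts (by linarith) hs
    have hb' : k b - k a = (b - a) • K t + e1 := by rw [he1def]; abel
    have hs' : k s - k t = (s - t) • K t + e2 := by rw [he2def]; abel
    rw [hb', hs']
    rw [inner_add_left, inner_add_right, inner_add_right, real_inner_smul_left,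
      real_inner_smul_left, real_inner_smul_right, real_inner_smul_right]
    have hKK : ⟪K t, K t⟫ = ‖K t‖^2 := real_inner_self_eq_norm_sq (K t)
    have hA := hmle t
    have hX : (0:ℝ) ≤ ‖K t‖ := le_trans hm.le hA
    have hba : (0:ℝ) ≤ b - a := by linarith
    have hst : (0:ℝ) ≤ s - t := by linarith
    have he1n : (0:ℝ) ≤ ‖e1‖ := norm_nonneg _
    have he2n : (0:ℝ) ≤ ‖e2‖ := norm_nonneg _
    have b2 : -(‖K t‖ * (m/4 * (s - t))) ≤ ⟪K t, e2⟫ := by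
      have h1 := abs_real_inner_le_norm (K t) e2
      rw [abs_le] at h1
      have := mul_le_mul_of_nonneg_left he2 hX
      linarith [h1.1]
    have b1 : -((m/4 * (b - a)) * ‖K t‖) ≤ ⟪e1, K t⟫ := by
      have h2 := abs_real_inner_le_norm e1 (K t)
      rw [abs_le] at h2
      have := mul_le_mul_of_nonneg_right he1 hX
      linarith [h2.1]
    have b3 : -((m/4 * (b - a)) * (m/4 * (s - t))) ≤ ⟪e1, e2⟫ := by
      have h3 := abs_real_inner_le_norm e1 e2
      rw [abs_le] at h3
      have := mul_le_mul he1 he2 he2n (by positivity : (0:ℝ) ≤ m/4 * (b - a))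
      linarith [h3.1]
    have B2 : (b - a) * (-(‖K t‖ * (m/4 * (s - t)))) ≤ (b - a) * ⟪K t, e2⟫ :=
      mul_le_mul_of_nonneg_left b2 hba
    have B1 : (s - t) * (-((m/4 * (b - a)) * ‖K t‖)) ≤ (s - t) * ⟪e1, K t⟫ :=
      mul_le_mul_of_nonneg_left b1 hst
    have hfac : (0:ℝ) ≤ (b - a) * (s - t) * (‖K t‖^2 - (m/2) * ‖K t‖ - 5*m^2/16) := by
      apply mul_nonneg (mul_nonneg hba hst)
      nlinarith [hA, hm]
    rw [hKK]
    nlinarith [B1, B2, b3, hfac]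
  have hmono : ∀ t a b : ℝ, t ≤ a → a < b → b ≤ t + 2*δ → ‖k a - k t‖ < ‖k b - k t‖ := by
    intro t a b hta hab hb
    have hgen : ∀ x y : EuclideanSpace ℝ (Fin 3),
        ⟪x - y, x⟫ + ⟪x - y, y⟫ = ‖x‖^2 - ‖y‖^2 := by
      intro x y
      rw [inner_sub_left, inner_sub_left, real_inner_comm y x, real_inner_self_eq_norm_sq,
        real_inner_self_eq_norm_sq]
      ring
    have hid := hgen (k b - k t) (k a - k t)
    have hxy : (k b - k t) - (k a - k t) = k b - k a := by abel
    rw [hxy] at hid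
    have hPb := hinner t a b b hta hab.le hb (by linarith) hb
    have hPa := hinner t a b a hta hab.le hb hta (by linarith)
    have hpos : (0:ℝ) < (b - a) * (b - t) * (m^2/4) :=
      mul_pos (mul_pos (sub_pos.2 hab) (sub_pos.2 (lt_of_le_of_lt hta hab)))
        (by positivity)
    have hnn : (0:ℝ) ≤ (b - a) * (a - t) * (m^2/4) :=
      mul_nonneg (mul_nonneg (sub_nonneg.2 hab.le) (sub_nonneg.2 hta)) (by positivity)
    have hsq : ‖k a - k t‖^2 < ‖k b - k t‖^2 := by linarith
    exact lt_of_pow_lt_pow_left₀ 2 (norm_nonneg _) hsq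
  have hmono' : ∀ t a b : ℝ, t ≤ a → a ≤ b → b ≤ t + 2*δ → ‖k a - k t‖ ≤ ‖k b - k t‖ := by
    intro t a b hta hab hb
    rcases eq_or_lt_of_le hab with rfl | h
    · exact le_rfl
    · exact (hmono t a b hta h hb).le
  set c₀ := 3/4 * m * δ with hc₀def
  have hc₀ : 0 < c₀ := by positivity
  have hex : ∀ c t : ℝ, ∃ s, 0 < c → c ≤ c₀ → (t < s ∧ s ≤ t + δ ∧ ‖k s - k t‖ = c) := by
    intro c t
    by_cases h : 0 < c ∧ c ≤ c₀
    · obtain ⟨hc, hcc⟩ := h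
      have hcont : ContinuousOn (fun s => ‖k s - k t‖) (Icc t (t + δ)) :=
        ((hkc.sub continuous_const).norm).continuousOn
      have hle : t ≤ t + δ := by linarith
      have hmem : c ∈ Icc ((fun s => ‖k s - k t‖) t) ((fun s => ‖k s - k t‖) (t + δ)) := by
        constructor
        · simp only [sub_self, norm_zero]; exact hc.le
        · have := hlow t (t + δ) hle (by linarith)
          simp only
          calc c ≤ c₀ := hcc
          _ = 3/4 * m * (t + δ - t) := by rw [hc₀def]; ring_nf
          _ ≤ ‖k (t + δ) - k t‖ := this
      obtain ⟨s, hs, hfs⟩ := intermediate_value_Icc hle hcont hmem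
      refine ⟨s, fun _ _ => ⟨?_, hs.2, hfs⟩⟩
      rcases eq_or_lt_of_le hs.1 with rfl | h
      · exfalso; simp only [sub_self, norm_zero] at hfs; exact hc.ne hfs
      · exact h
    · exact ⟨0, fun h1 h2 => absurd ⟨h1, h2⟩ h⟩
  choose φ hφ using hex
  set S := Ioc (0:ℝ) c₀ with hSdef
  -- continuity of the step along a continuous family
  have hstepc : ∀ (f : ℝ → ℝ) (c : ℝ), c ∈ S → ContinuousWithinAt f S c →
      ContinuousWithinAt (fun x => φ x (f x)) S c := by
    intro f c hc hf
    obtain ⟨hts, hsd, hks⟩ := hφ c (f c) hc.1 hc.2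
    set t := f c
    set s := φ c t
    rw [Metric.continuousWithinAt_iff]
    intro ε hε
    set ε' := min (min (ε/2) ((s - t)/2)) (δ/2) with hε'def
    have hε' : 0 < ε' := by
      apply lt_min (lt_min (by linarith) (by linarith)) (by linarith)
    have hε'1 : ε' ≤ ε/2 := le_trans (min_le_left _ _) (min_le_left _ _)
    have hε'2 : ε' ≤ (s - t)/2 := le_trans (min_le_left _ _) (min_le_right _ _)
    have hε'3 : ε' ≤ δ/2 := min_le_right _ _
    have hAm : ‖k (s - ε') - k t‖ < c := by
      rw [← hks]
      exact hmono t (s - ε') s (by linarith) (by linarith) (by linarith)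
    have hAp : c < ‖k (s + ε') - k t‖ := by
      rw [← hks]
      exact hmono t s (s + ε') (by linarith) (by linarith) (by linarith)
    set α := min (c - ‖k (s - ε') - k t‖) (‖k (s + ε') - k t‖ - c) with hαdef
    have hα : 0 < α := lt_min (by linarith) (by linarith)
    have hα1 : ‖k (s - ε') - k t‖ ≤ c - α := by
      have := min_le_left (c - ‖k (s - ε') - k t‖) (‖k (s + ε') - k t‖ - c); linarith
    have hα2 : c + α ≤ ‖k (s + ε') - k t‖ := by
      have := min_le_right (c - ‖k (s - ε') - k t‖) (‖k (s + ε') - k t‖ - c); linarith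
    -- continuity of k at t
    obtain ⟨ρ, hρ, hρ'⟩ := Metric.continuousAt_iff.1 hkc.continuousAt (α/2) (by linarith)
    -- continuity of f at c within S
    rw [Metric.continuousWithinAt_iff] at hf
    set β := min (min ρ ((s - t)/2)) (δ/2) with hβdef
    have hβpos : 0 < β := lt_min (lt_min hρ (by linarith)) (by linarith)
    obtain ⟨η₁, hη₁, hη₁'⟩ := hf β hβpos
    refine ⟨min η₁ (α/2), lt_min hη₁ (by linarith), ?_⟩
    intro x hx hxc
    have hxc1 : dist x c < η₁ := lt_of_lt_of_le hxc (min_le_left _ _)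
    have hxc2 : dist x c < α/2 := lt_of_lt_of_le hxc (min_le_right _ _)
    have hxα : |x - c| < α/2 := by rwa [Real.dist_eq] at hxc2
    have hft := hη₁' hx hxc1
    rw [Real.dist_eq] at hft
    set t' := f x with ht'def
    have hβρ : |t' - t| < ρ := lt_of_lt_of_le hft (le_trans (min_le_left _ _) (min_le_left _ _))
    have hβst : |t' - t| < (s - t)/2 :=
      lt_of_lt_of_le hft (le_trans (min_le_left _ _) (min_le_right _ _))
    have hβδ : |t' - t| < δ/2 := lt_of_lt_of_le hft (min_le_right _ _)
    rw [abs_lt] at hβst hβδ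
    have hkt' : ‖k t' - k t‖ < α/2 := by
      have := hρ' (show dist t' t < ρ by rwa [Real.dist_eq])
      rwa [dist_eq_norm] at this
    obtain ⟨h1', h2', h3'⟩ := hφ x t' hx.1 hx.2
    set s' := φ x t' with hs'def
    -- bounds placing s - ε' and s + ε' in the monotone window of t'
    have hw1 : t' < s - ε' := by linarith
    have hw2 : s + ε' ≤ t' + 2*δ := by linarith
    -- s' > s - ε'
    have hgt : s - ε' < s' := by
      by_contra h
      push_neg at h
      have h5 : ‖k s' - k t'‖ ≤ ‖k (s - ε') - k t'‖ :=
        hmono' t' s' (s - ε') h1'.le h (by linarith)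
      have h6 : ‖k (s - ε') - k t'‖ ≤ ‖k (s - ε') - k t‖ + ‖k t - k t'‖ :=
        norm_sub_le_norm_sub_add_norm_sub _ _ _
      have h7 : ‖k t - k t'‖ = ‖k t' - k t‖ := norm_sub_rev _ _
      rw [h3'] at h5
      rw [abs_lt] at hxα
      linarith
    have hlt : s' < s + ε' := by
      by_contra h
      push_neg at h
      have h5 : ‖k (s + ε') - k t'‖ ≤ ‖k s' - k t'‖ :=
        hmono' t' (s + ε') s' (by linarith) h (by linarith)
      have h6 : ‖k (s + ε') - k t‖ ≤ ‖k (s + ε') - k t'‖ + ‖k t' - k t‖ :=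
        norm_sub_le_norm_sub_add_norm_sub _ _ _
      rw [h3'] at h5
      rw [abs_lt] at hxα
      linarith
    have : dist s' s < ε := by
      rw [Real.dist_eq, abs_lt]
      constructor <;> [linarith; linarith]
    exact this
  set T : ℝ → ℕ → ℝ := fun c i => (φ c)^[i] 0 with hTdef
  have hTsucc : ∀ c i, T c (i + 1) = φ c (T c i) := by
    intro c i; simp only [hTdef, Function.iterate_succ_apply']
  have hTcont : ∀ i : ℕ, ContinuousOn (fun c => T c i) S := by
    intro i
    induction i with
    | zero => simpa only [hTdef, Function.iterate_zero, id] using continuousOn_const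
    | succ i ih =>
      intro c hc
      have h := hstepc (fun c => T c i) c hc (ih c hc)
      have : (fun x => φ x (T x i)) = fun c => T c (i + 1) := by
        funext x; rw [hTsucc]
      rwa [this] at h
  -- step bounds
  have hstep_lb : ∀ c ∈ S, ∀ t : ℝ, t + c / M ≤ φ c t := by
    intro c hc t
    obtain ⟨h1, h2, h3⟩ := hφ c t hc.1 hc.2
    have h4 := hLip t (φ c t) h1.le
    rw [h3] at h4
    have h5 : c / M ≤ φ c t - t := by rw [div_le_iff₀ hM]; nlinarith
    linarith
  have hstep_ub : ∀ c ∈ S, ∀ t : ℝ, φ c t ≤ t + c / (3/4 * m) := by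
    intro c hc t
    obtain ⟨h1, h2, h3⟩ := hφ c t hc.1 hc.2
    have h4 := hlow t (φ c t) h1.le (by linarith)
    rw [h3] at h4
    have h34 : (0:ℝ) < 3/4 * m := by positivity
    have h5 : φ c t - t ≤ c / (3/4 * m) := by rw [le_div_iff₀ h34]; nlinarith
    linarith
  have hT_lb : ∀ c ∈ S, ∀ i : ℕ, (i : ℝ) * (c / M) ≤ T c i := by
    intro c hc i
    induction i with
    | zero => simp [hTdef]
    | succ i ih =>
      have := hstep_lb c hc (T c i)
      rw [hTsucc]
      push_cast
      linarith
  have hT_ub : ∀ c ∈ S, ∀ i : ℕ, T c i ≤ (i : ℝ) * (c / (3/4 * m)) := by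
    intro c hc i
    induction i with
    | zero => simp [hTdef]
    | succ i ih =>
      have := hstep_ub c hc (T c i)
      rw [hTsucc]
      push_cast
      linarith
  refine ⟨⌈M / c₀⌉₊, ?_⟩
  intro n hn
  have hn0 : 0 < n := lt_of_le_of_lt (Nat.zero_le _) hn
  have hnR : M / c₀ < (n : ℝ) := by
    calc M / c₀ ≤ (⌈M / c₀⌉₊ : ℝ) := Nat.le_ceil _
    _ < (n : ℝ) := by exact_mod_cast hn
  have hnc₀ : M / (n:ℝ) < c₀ := by
    rw [div_lt_iff₀ (by positivity : (0:ℝ) < (n:ℝ))]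
    rw [div_lt_iff₀ hc₀] at hnR
    linarith
  set c₁ := 3 * m / (8 * n) with hc₁def
  have hc₁ : 0 < c₁ := by positivity
  have hc₁c₀ : c₁ < c₀ := by
    have h1 : c₁ < m / (n:ℝ) := by
      rw [hc₁def, div_lt_div_iff₀ (by positivity) (by positivity : (0:ℝ) < (n:ℝ))]
      have : (0:ℝ) < (n:ℝ) := by positivity
      nlinarith
    have h2 : m / (n:ℝ) ≤ M / (n:ℝ) := by gcongr
    linarith
  have hsub : Icc c₁ c₀ ⊆ S := fun x hx => ⟨lt_of_lt_of_le hc₁ hx.1, hx.2⟩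
  have hGcont : ContinuousOn (fun c => T c n) (Icc c₁ c₀) := (hTcont n).mono hsub
  have hG₁ : T c₁ n ≤ 1/2 := by
    have h := hT_ub c₁ (hsub ⟨le_refl c₁, hc₁c₀.le⟩) n
    have hcalc : (n:ℝ) * (c₁ / (3/4*m)) = 1/2 := by
      rw [hc₁def]
      have hn' : (n:ℝ) ≠ 0 := by positivity
      field_simp
      ring
    linarith
  have hG₀ : 1 < T c₀ n := by
    have h := hT_lb c₀ ⟨hc₀, le_refl c₀⟩ n
    have h2 : 1 < (n:ℝ) * (c₀ / M) := by
      rw [div_lt_iff₀ hc₀] at hnR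
      rw [show (n:ℝ) * (c₀ / M) = (n:ℝ) * c₀ / M by ring, lt_div_iff₀ hM]
      linarith
    linarith
  have hmem1 : (1:ℝ) ∈ Icc ((fun c => T c n) c₁) ((fun c => T c n) c₀) :=
    ⟨by simpa using hG₁.trans (by norm_num), by simpa using hG₀.le⟩
  obtain ⟨c, hcmem, hc1⟩ := intermediate_value_Icc hc₁c₀.le hGcont hmem1
  simp only at hc1
  have hcS : c ∈ S := hsub hcmem
  have hT0 : T c 0 = 0 := by simp [hTdef]
  refine ⟨T c, c, hcS.1, by rw [hT0], ?_, by rw [hc1, hT0]; norm_num, ?_, ?_⟩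
  · have hlt : T c (n-1) < T c ((n-1)+1) := by
      rw [hTsucc]; exact (hφ c _ hcS.1 hcS.2).1
    have heq : (n-1)+1 = n := by omega
    rw [heq] at hlt
    rwa [hc1] at hlt
  · intro i _
    rw [hTsucc]
    exact (hφ c _ hcS.1 hcS.2).1
  · intro i _
    rw [hTsucc, norm_sub_rev]
    exact (hφ c _ hcS.1 hcS.2).2.2
end

section
/- Let k : ℝ → ℝ³ be a smooth knot (C¹, period 1, injective on [0,1), nowhere-vanishing derivative) with k(0) = 0, and let n ≥ 3. Write d(s,t) = ‖k(s) − k(t)‖. Then there exist r > 0, a compact interval J containing 0 in its interior whose image k(J) equals the intersection of the knot with the closed ball of radius r centered at k(0), and a number ε > 0, such that: (a) for all t' < t in J, the partial derivative ∂d(t',t)/∂t is strictly positive; (b) there exist 0 = a₀ < a₁ < ⋯ < a_{n-1} in J with d(a_{i-1}, a_i) = ε for i = 1, …, n−1; and (c) for each i = 1, …, n−2, if t ∈ [0,1) satisfies d(a_i, t) = ε, then t = a_{i-1} or t = a_{i+1}. -/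
open Set Metric
open scoped RealInnerProductSpace

/-- Derivative of the chord-length function `s ↦ ‖k s - c‖` at a point where `k t ≠ c`. -/
private lemma chord_hasDerivAt {E : Type*} [NormedAddCommGroup E] [InnerProductSpace ℝ E]
    {k : ℝ → E} (hdiff : Differentiable ℝ k) (c : E) {t : ℝ} (hne : k t - c ≠ 0) :
    HasDerivAt (fun s => ‖k s - c‖) (⟪k t - c, deriv k t⟫ / ‖k t - c‖) t := by
  have hd : HasDerivAt k (deriv k t) t := (hdiff t).hasDerivAt
  have h1 : HasDerivAt (fun s => k s - c) (deriv k t) t := hd.sub_const c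
  have h2 : HasDerivAt (fun s => ⟪k s - c, k s - c⟫)
      (⟪k t - c, deriv k t⟫ + ⟪deriv k t, k t - c⟫) t := h1.inner ℝ h1
  have hnorm : (0:ℝ) < ‖k t - c‖ := norm_pos_iff.mpr hne
  have hq : ⟪k t - c, k t - c⟫ ≠ 0 := by
    rw [real_inner_self_eq_norm_mul_norm]; positivity
  have h3 := (Real.hasDerivAt_sqrt hq).comp t h2
  have heq : (fun s => ‖k s - c‖) = fun s => Real.sqrt ⟪k s - c, k s - c⟫ := by
    funext s
    rw [real_inner_self_eq_norm_mul_norm, Real.sqrt_mul_self (norm_nonneg _)]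
  rw [heq]
  refine h3.congr_deriv ?_
  symm
  rw [real_inner_self_eq_norm_mul_norm, Real.sqrt_mul_self (norm_nonneg _),
    real_inner_comm (deriv k t) (k t - c)]
  field_simp
  ring

set_option maxHeartbeats 4000000 in
/-- **Lemma 2** of the paper. For a smooth knot `k` with `k 0 = 0` and any
`n ≥ 3`, there are `r > 0`, a compact interval `J = [u,v]` containing `0` in
its interior with `k '' J = (range k) ∩ closedBall (k 0) r`, and `ε > 0` such
that:
(a) for `t' < t` in `J` the chord length `t ↦ ‖k t - k t'‖` has strictly
positive derivative at `t`;
(b) there are `0 = a₀ < a₁ < ⋯ < a_{n-1}` in `J` with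
`‖k (a i) - k (a (i+1))‖ = ε` for `i < n - 1`;
(c) for `1 ≤ i ≤ n-2`, if `t ∈ [0,1)` and `‖k (a i) - k t‖ = ε`, then
`t = a (i-1)` or `t = a (i+1)`. -/
theorem smooth_knot_local_epsilon_chain
    (k : ℝ → EuclideanSpace ℝ (Fin 3))
    (hk : ContDiff ℝ 1 k)
    (hper : ∀ t : ℝ, k (t + 1) = k t)
    (hinj : Set.InjOn k (Set.Ico (0 : ℝ) 1))
    (hreg : ∀ t : ℝ, deriv k t ≠ 0)
    (hk0 : k 0 = 0)
    (n : ℕ) (hn : 3 ≤ n) :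
    ∃ (r u v ε : ℝ), 0 < r ∧ u < 0 ∧ 0 < v ∧ 0 < ε ∧
      k '' (Set.Icc u v) = Set.range k ∩ Metric.closedBall (k 0) r ∧
      (∀ t' ∈ Set.Icc u v, ∀ t ∈ Set.Icc u v, t' < t →
        ∃ d' : ℝ, 0 < d' ∧ HasDerivAt (fun s => ‖k s - k t'‖) d' t) ∧
      ∃ a : ℕ → ℝ, a 0 = 0 ∧
        (∀ i ≤ n - 1, a i ∈ Set.Icc u v) ∧
        (∀ i < n - 1, a i < a (i + 1)) ∧
        (∀ i < n - 1, ‖k (a i) - k (a (i + 1))‖ = ε) ∧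
        (∀ i, 1 ≤ i → i ≤ n - 2 → ∀ t ∈ Set.Ico (0 : ℝ) 1,
          ‖k (a i) - k t‖ = ε → t = a (i - 1) ∨ t = a (i + 1)) := by
  classical
  have hdiff : Differentiable ℝ k := hk.differentiable one_ne_zero
  have hkc : Continuous k := hdiff.continuous
  have hk' : Continuous (deriv k) := hk.continuous_deriv le_rfl
  set w := deriv k 0 with hw
  have hw0 : w ≠ 0 := hreg 0
  have hwpos : 0 < ‖w‖ := norm_pos_iff.mpr hw0
  -- choose δ
  obtain ⟨δ₀, hδ₀pos, hδ₀⟩ := Metric.continuousAt_iff.1 (hk'.continuousAt (x := (0:ℝ)))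
      (‖w‖/4) (by positivity)
  set δ : ℝ := min (δ₀/2) (1/4) with hδdef
  have hδpos : 0 < δ := by positivity
  have hδ14 : δ ≤ 1/4 := min_le_right _ _
  have hδball : ∀ x ∈ Icc (-δ) δ, ‖deriv k x - w‖ ≤ ‖w‖/4 := by
    intro x hx
    have hx' : |x| ≤ δ := abs_le.2 ⟨by linarith [hx.1], hx.2⟩
    have hd : dist x 0 < δ₀ := by
      rw [Real.dist_eq, sub_zero]
      have := min_le_left (δ₀/2) (1/4)
      calc |x| ≤ δ := hx'
        _ < δ₀ := by simp only [hδdef]; linarith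
    have := hδ₀ hd
    rw [dist_eq_norm] at this
    exact this.le
  -- basic estimate
  have hEst : ∀ s ∈ Icc (-δ) δ, ∀ t ∈ Icc (-δ) δ,
      ‖k t - k s - (t - s) • w‖ ≤ ‖w‖/4 * |t - s| := by
    intro s hs t ht
    have hder : ∀ x ∈ Icc (-δ) δ, HasDerivWithinAt (fun y => k y - y • w)
        (deriv k x - w) (Icc (-δ) δ) x := by
      intro x hx
      have h1 : HasDerivAt (fun y : ℝ => y • w) w x := by
        simpa using (hasDerivAt_id x).smul_const w
      exact (((hdiff x).hasDerivAt).sub h1).hasDerivWithinAt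
    have := Convex.norm_image_sub_le_of_norm_hasDerivWithin_le hder
      (fun x hx => hδball x hx) (convex_Icc _ _) hs ht
    have heq : (k t - t • w) - (k s - s • w) = k t - k s - (t - s) • w := by
      rw [sub_smul]; abel
    rw [heq, Real.norm_eq_abs] at this
    exact this
  have hLow : ∀ s ∈ Icc (-δ) δ, ∀ t ∈ Icc (-δ) δ, s ≤ t →
      ‖w‖/2 * (t - s) ≤ ‖k t - k s‖ := by
    intro s hs t ht hst
    have he := hEst s hs t ht
    rw [abs_of_nonneg (by linarith)] at he
    have h1 : ‖(t - s) • w‖ - ‖k t - k s‖ ≤ ‖(t - s) • w - (k t - k s)‖ :=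
      norm_sub_norm_le _ _
    have h2 : ‖(t - s) • w - (k t - k s)‖ = ‖k t - k s - (t - s) • w‖ := norm_sub_rev _ _
    rw [h2, norm_smul, Real.norm_eq_abs, abs_of_nonneg (by linarith)] at h1
    nlinarith [mul_nonneg (norm_nonneg w) (sub_nonneg.2 hst)]
  have hUp : ∀ s ∈ Icc (-δ) δ, ∀ t ∈ Icc (-δ) δ, s ≤ t →
      ‖k t - k s‖ ≤ 2 * ‖w‖ * (t - s) := by
    intro s hs t ht hst
    have he := hEst s hs t ht
    rw [abs_of_nonneg (by linarith)] at he
    have h1 : ‖k t - k s‖ ≤ ‖(t - s) • w‖ + ‖k t - k s - (t - s) • w‖ :=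
      calc ‖k t - k s‖ = ‖(t - s) • w + (k t - k s - (t - s) • w)‖ := by congr 1; abel
        _ ≤ _ := norm_add_le _ _
    rw [norm_smul, Real.norm_eq_abs, abs_of_nonneg (by linarith)] at h1
    nlinarith [norm_nonneg w]
  have hInner : ∀ s ∈ Icc (-δ) δ, ∀ t ∈ Icc (-δ) δ, s ≤ t → ∀ x ∈ Icc (-δ) δ,
      7/16 * (‖w‖ * ‖w‖) * (t - s) ≤ ⟪k t - k s, deriv k x⟫ := by
    intro s hs t ht hst x hx
    have he : ‖k t - k s - (t - s) • w‖ ≤ ‖w‖/4 * (t - s) := by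
      have := hEst s hs t ht
      rwa [abs_of_nonneg (by linarith)] at this
    have he' : ‖deriv k x - w‖ ≤ ‖w‖/4 := hδball x hx
    have hkts : k t - k s = (t - s) • w + (k t - k s - (t - s) • w) := by abel
    have hdx : deriv k x = w + (deriv k x - w) := by abel
    rw [hkts, hdx]
    simp only [inner_add_left, inner_add_right, real_inner_smul_left]
    rw [real_inner_self_eq_norm_mul_norm]
    nlinarith [(abs_le.1 (abs_real_inner_le_norm w (deriv k x - w))).1,
      (abs_le.1 (abs_real_inner_le_norm (k t - k s - (t - s) • w) w)).1,
      (abs_le.1 (abs_real_inner_le_norm (k t - k s - (t - s) • w) (deriv k x - w))).1,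
      norm_nonneg (k t - k s - (t - s) • w), norm_nonneg (deriv k x - w),
      norm_nonneg w, hst, mul_le_mul_of_nonneg_left he' (norm_nonneg w),
      mul_le_mul_of_nonneg_right he (norm_nonneg w),
      mul_le_mul he he' (norm_nonneg _) (mul_nonneg (by positivity) (by linarith))]
  -- strict monotonicity of chord length
  have hMono : ∀ b ∈ Icc (-δ) δ, StrictMonoOn (fun x => ‖k x - k b‖) (Icc b δ) := by
    intro b hb
    apply strictMonoOn_of_deriv_pos (convex_Icc b δ)
      ((hkc.sub continuous_const).norm.continuousOn)
    intro x hx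
    rw [interior_Icc] at hx
    have hxm : x ∈ Icc (-δ) δ := ⟨le_trans hb.1 hx.1.le, hx.2.le⟩
    have hlow := hLow b hb x hxm hx.1.le
    have hne : k x - k b ≠ 0 := by
      apply norm_pos_iff.mp
      have : 0 < ‖w‖/2 * (x - b) := by nlinarith [hx.1]
      linarith
    show 0 < deriv (fun s => ‖k s - k b‖) x
    rw [(chord_hasDerivAt hdiff (k b) hne).deriv]
    apply div_pos _ (norm_pos_iff.mpr hne)
    have := hInner b hb x hxm hx.1.le x hxm
    nlinarith [mul_pos (mul_pos hwpos hwpos) (sub_pos.2 hx.1)]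
  have hAnti : ∀ b ∈ Icc (-δ) δ, StrictAntiOn (fun x => ‖k x - k b‖) (Icc (-δ) b) := by
    intro b hb
    apply strictAntiOn_of_deriv_neg (convex_Icc (-δ) b)
      ((hkc.sub continuous_const).norm.continuousOn)
    intro x hx
    rw [interior_Icc] at hx
    have hxm : x ∈ Icc (-δ) δ := ⟨hx.1.le, le_trans hx.2.le hb.2⟩
    have hlow := hLow x hxm b hb hx.2.le
    have hne : k x - k b ≠ 0 := by
      rw [← neg_sub, neg_ne_zero]
      apply norm_pos_iff.mp
      have : 0 < ‖w‖/2 * (b - x) := by nlinarith [hx.2]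
      linarith
    show deriv (fun s => ‖k s - k b‖) x < 0
    rw [(chord_hasDerivAt hdiff (k b) hne).deriv]
    apply div_neg_of_neg_of_pos _ (norm_pos_iff.mpr hne)
    have heq : k x - k b = -(k b - k x) := by abel
    rw [heq, inner_neg_left]
    have hpos : (0:ℝ) < ⟪k b - k x, deriv k x⟫ := by
      have := hInner x hxm b hb hx.2.le x hxm
      nlinarith [mul_pos (mul_pos hwpos hwpos) (sub_pos.2 hx.2)]
    linarith
  -- membership helpers
  have h0mem : (0:ℝ) ∈ Icc (-δ) δ := ⟨by linarith, hδpos.le⟩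
  have hδmem : δ ∈ Icc (-δ) δ := ⟨by linarith, le_rfl⟩
  have hmδmem : -δ ∈ Icc (-δ) δ := ⟨le_rfl, by linarith⟩
  -- periodicity
  have hP : Function.Periodic k 1 := hper
  have hfract : ∀ t : ℝ, k (Int.fract t) = k t := by
    intro t
    have := hP.sub_int_mul_eq (x := t) ⌊t⌋
    rw [mul_one] at this
    exact this
  -- the knot does not return to the origin in the middle of the period
  have hmid : ∀ s ∈ Icc δ (1-δ), k s ≠ k 0 := by
    intro s hs hks
    have hs01 : s ∈ Ico (0:ℝ) 1 := ⟨by linarith [hs.1], by linarith [hs.2]⟩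
    have h001 : (0:ℝ) ∈ Ico (0:ℝ) 1 := ⟨le_rfl, one_pos⟩
    have := hinj hs01 h001 hks
    linarith [hs.1]
  obtain ⟨m, hmS, hmin⟩ := (isCompact_Icc (a := δ) (b := 1-δ)).exists_isMinOn
    ⟨δ, le_rfl, by linarith⟩ ((hkc.sub continuous_const).norm.continuousOn)
  set ρ := ‖k m - k 0‖ with hρdef
  have hρpos : 0 < ρ := norm_pos_iff.mpr (sub_ne_zero.mpr (hmid m hmS))
  have hρmin : ∀ s ∈ Icc δ (1-δ), ρ ≤ ‖k s - k 0‖ := fun s hs => isMinOn_iff.1 hmin s hs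
  -- values at the endpoints ±δ
  have hφδ : ‖w‖/2 * δ ≤ ‖k δ - k 0‖ := by
    have := hLow 0 h0mem δ hδmem hδpos.le
    simpa using this
  have hφmδ : ‖w‖/2 * δ ≤ ‖k (-δ) - k 0‖ := by
    have := hLow (-δ) hmδmem 0 h0mem (by linarith)
    rw [norm_sub_rev]
    simpa using this
  -- the radius r
  set r := min (ρ/2) (min ‖k δ - k 0‖ ‖k (-δ) - k 0‖) with hrdef
  have hrpos : 0 < r := by
    have h1 : 0 < ‖w‖/2 * δ := by positivity
    exact lt_min (by positivity) (lt_min (lt_of_lt_of_le h1 hφδ) (lt_of_lt_of_le h1 hφmδ))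
  have hrρ : r ≤ ρ/2 := min_le_left _ _
  have hrδ : r ≤ ‖k δ - k 0‖ := le_trans (min_le_right _ _) (min_le_left _ _)
  have hrmδ : r ≤ ‖k (-δ) - k 0‖ := le_trans (min_le_right _ _) (min_le_right _ _)
  -- find v
  have hcont0 : ContinuousOn (fun x => ‖k x - k 0‖) (Icc 0 δ) :=
    (hkc.sub continuous_const).norm.continuousOn
  obtain ⟨v, hvmem, hvval⟩ := intermediate_value_Icc hδpos.le hcont0
    (by simp only [sub_self, norm_zero]; exact ⟨hrpos.le, hrδ⟩)
  replace hvval : ‖k v - k 0‖ = r := hvval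
  have hvpos : 0 < v := by
    rcases eq_or_lt_of_le hvmem.1 with h | h
    · exfalso
      rw [← h, sub_self, norm_zero] at hvval
      linarith
    · exact h
  -- find u
  have hcont0' : ContinuousOn (fun x => ‖k x - k 0‖) (Icc (-δ) 0) :=
    (hkc.sub continuous_const).norm.continuousOn
  obtain ⟨u, humem, huval⟩ := intermediate_value_Icc' (by linarith : -δ ≤ (0:ℝ)) hcont0'
    (by simp only [sub_self, norm_zero]; exact ⟨hrpos.le, hrmδ⟩)
  replace huval : ‖k u - k 0‖ = r := huval
  have huneg : u < 0 := by
    rcases eq_or_lt_of_le humem.2 with h | h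
    · exfalso
      rw [h, sub_self, norm_zero] at huval
      linarith
    · exact h
  have hvδ : v ≤ δ := hvmem.2
  have huδ : -δ ≤ u := humem.1
  -- monotonicity from the base point 0
  have hM0 := hMono 0 h0mem
  have hA0 := hAnti 0 h0mem
  -- the image equality
  have hImage : k '' (Icc u v) = range k ∩ closedBall (k 0) r := by
    ext x
    constructor
    · rintro ⟨t, ht, rfl⟩
      refine ⟨mem_range_self t, ?_⟩
      rw [mem_closedBall, dist_eq_norm]
      rcases le_total t 0 with h0 | h0
      · have h1 : t ∈ Icc (-δ) (0:ℝ) := ⟨le_trans huδ ht.1, h0⟩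
        have h2 : u ∈ Icc (-δ) (0:ℝ) := ⟨huδ, huneg.le⟩
        have := hA0.antitoneOn h2 h1 ht.1
        rw [huval] at this
        exact this
      · have h1 : t ∈ Icc (0:ℝ) δ := ⟨h0, le_trans ht.2 hvδ⟩
        have h2 : v ∈ Icc (0:ℝ) δ := ⟨hvpos.le, hvδ⟩
        have := hM0.monotoneOn h1 h2 ht.2
        rw [hvval] at this
        exact this
    · rintro ⟨⟨t₀, rfl⟩, hball⟩
      rw [mem_closedBall, dist_eq_norm] at hball
      set s := Int.fract t₀ with hsdef
      have hs0 : 0 ≤ s := Int.fract_nonneg t₀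
      have hs1 : s < 1 := Int.fract_lt_one t₀
      have hks : k s = k t₀ := hfract t₀
      have hsr : ‖k s - k 0‖ ≤ r := by rw [hks]; exact hball
      have hsmid : s ∉ Icc δ (1-δ) := by
        intro hmem
        have := hρmin s hmem
        linarith
      rw [mem_Icc, not_and_or, not_le, not_le] at hsmid
      rcases hsmid with hlt | hgt
      · have hsmem : s ∈ Icc (0:ℝ) δ := ⟨hs0, hlt.le⟩
        have hsv : s ≤ v := by
          by_contra hc
          push_neg at hc
          have := hM0 ⟨hvpos.le, hvδ⟩ hsmem hc
          simp only at this
          rw [hvval] at this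
          linarith
        exact ⟨s, ⟨le_trans humem.2 hs0, hsv⟩, hks⟩
      · have hks' : k (s-1) = k s := by
          have := hper (s-1)
          rw [sub_add_cancel] at this
          exact this.symm
        have hs'mem : s - 1 ∈ Icc (-δ) (0:ℝ) := ⟨by linarith, by linarith⟩
        have hs'r : ‖k (s-1) - k 0‖ ≤ r := by rw [hks']; exact hsr
        have hs'u : u ≤ s - 1 := by
          by_contra hc
          push_neg at hc
          have := hA0 hs'mem ⟨huδ, huneg.le⟩ hc
          simp only at this
          rw [huval] at this
          linarith
        exact ⟨s - 1, ⟨hs'u, by linarith [hvpos]⟩, by rw [hks', hks]⟩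
  -- condition (a)
  have hsubδ : Icc u v ⊆ Icc (-δ) δ := Icc_subset_Icc huδ hvδ
  have haDeriv : ∀ t' ∈ Icc u v, ∀ t ∈ Icc u v, t' < t →
      ∃ d' : ℝ, 0 < d' ∧ HasDerivAt (fun s => ‖k s - k t'‖) d' t := by
    intro t' ht' t ht hlt
    have ht'm := hsubδ ht'
    have htm := hsubδ ht
    have hne : k t - k t' ≠ 0 := by
      apply norm_pos_iff.mp
      have := hLow t' ht'm t htm hlt.le
      nlinarith [mul_pos (half_pos hwpos) (sub_pos.2 hlt)]
    refine ⟨_, ?_, chord_hasDerivAt hdiff (k t') hne⟩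
    apply div_pos _ (norm_pos_iff.mpr hne)
    have := hInner t' ht'm t htm hlt.le t htm
    nlinarith [mul_pos (mul_pos hwpos hwpos) (sub_pos.2 hlt)]
  -- the step size ε
  have hn0 : (0:ℝ) < (n:ℝ) := by exact_mod_cast Nat.lt_of_lt_of_le (by norm_num) hn
  set ε := min (‖w‖ * v / (2 * n)) (r / (4 * n)) with hεdef
  have hεpos : 0 < ε :=
    lt_min (div_pos (mul_pos hwpos hvpos) (by linarith)) (div_pos hrpos (by linarith))
  set B := 2 * ε / ‖w‖ with hBdef
  have hB0 : 0 < B := by positivity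
  have hwB : ‖w‖ * B = 2 * ε := by
    rw [hBdef]; field_simp
  have hBv : (n:ℝ) * B ≤ v := by
    have h1 : ε ≤ ‖w‖ * v / (2 * n) := min_le_left _ _
    have h2 : ε * (2 * n) ≤ ‖w‖ * v := (le_div_iff₀ (by linarith)).1 h1
    rw [hBdef, mul_div_assoc', div_le_iff₀ hwpos]
    nlinarith
  have hεr : 4 * (n:ℝ) * ε ≤ r := by
    have h1 : ε ≤ r / (4 * n) := min_le_right _ _
    have h2 : ε * (4 * n) ≤ r := (le_div_iff₀ (by linarith)).1 h1
    linarith [h2]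
  -- existence of the next chain point
  have hstepEx : ∀ x, 0 ≤ x → x ≤ ((n:ℝ) - 2) * B →
      ∃ t, t ∈ Ioc x v ∧ ‖k t - k x‖ = ε := by
    intro x hx0 hxB
    have hn3 : (3:ℝ) ≤ (n:ℝ) := by exact_mod_cast hn
    have hxv2 : x + 2 * B ≤ v := by nlinarith
    have hxv : x ≤ v := by nlinarith
    have hxm : x ∈ Icc (-δ) δ := ⟨by linarith, by linarith⟩
    have hvm : v ∈ Icc (-δ) δ := ⟨by linarith, hvδ⟩
    have hroom : ε ≤ ‖k v - k x‖ := by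
      have := hLow x hxm v hvm hxv
      nlinarith
    have hcont : ContinuousOn (fun y => ‖k y - k x‖) (Icc x v) :=
      (hkc.sub continuous_const).norm.continuousOn
    obtain ⟨t, htm, htv⟩ := intermediate_value_Icc hxv hcont
      (by simp only [sub_self, norm_zero]; exact ⟨hεpos.le, hroom⟩)
    replace htv : ‖k t - k x‖ = ε := htv
    refine ⟨t, ⟨?_, htm.2⟩, htv⟩
    rcases eq_or_lt_of_le htm.1 with h | h
    · exfalso
      rw [← h, sub_self, norm_zero] at htv
      linarith
    · exact h
  -- the chain
  obtain ⟨step, hstepspec⟩ : ∃ step : ℝ → ℝ, ∀ x, 0 ≤ x → x ≤ ((n:ℝ) - 2) * B →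
      step x ∈ Ioc x v ∧ ‖k (step x) - k x‖ = ε := by
    refine ⟨fun x => if h : ∃ t, t ∈ Ioc x v ∧ ‖k t - k x‖ = ε then h.choose else x, ?_⟩
    intro x hx0 hxB
    have hex := hstepEx x hx0 hxB
    simp only [dif_pos hex]
    exact hex.choose_spec
  obtain ⟨a, ha0, hsucc⟩ : ∃ a : ℕ → ℝ, a 0 = 0 ∧ ∀ i, a (i+1) = step (a i) :=
    ⟨fun i => step^[i] 0, rfl, fun i => Function.iterate_succ_apply' step i 0⟩
  have hcastn2 : ∀ i : ℕ, i ≤ n - 2 → (i:ℝ) ≤ (n:ℝ) - 2 := by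
    intro i hi
    have h1 : (i:ℝ) ≤ ((n - 2 : ℕ):ℝ) := Nat.cast_le.2 hi
    have h2 : ((n - 2 : ℕ):ℝ) = (n:ℝ) - 2 := by
      rw [Nat.cast_sub (by omega)]; norm_num
    linarith
  have hmain : ∀ i, i ≤ n - 1 → 0 ≤ a i ∧ a i ≤ (i:ℝ) * B := by
    intro i
    induction i with
    | zero => intro _; rw [ha0]; norm_num
    | succ i ih =>
      intro hi
      obtain ⟨h0, h1⟩ := ih (Nat.le_of_succ_le hi)
      have hin2 : (i:ℝ) ≤ (n:ℝ) - 2 := hcastn2 i (by omega)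
      have hxB : a i ≤ ((n:ℝ) - 2) * B :=
        le_trans h1 (mul_le_mul_of_nonneg_right hin2 hB0.le)
      have hs := hstepspec (a i) h0 hxB
      rw [← hsucc i] at hs
      have haiv : a i ≤ v := le_of_lt (lt_of_lt_of_le hs.1.1 hs.1.2)
      have haim : a i ∈ Icc (-δ) δ := ⟨by linarith, by linarith⟩
      have haim' : a (i+1) ∈ Icc (-δ) δ :=
        ⟨by linarith [hs.1.1], by linarith [hs.1.2]⟩
      have hlow := hLow (a i) haim (a (i+1)) haim' hs.1.1.le
      rw [hs.2] at hlow
      have hBstep : a (i+1) - a i ≤ B := by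
        rw [hBdef]
        rw [le_div_iff₀ hwpos]
        nlinarith
      refine ⟨le_trans h0 hs.1.1.le, ?_⟩
      push_cast
      have hring : ((i:ℝ) + 1) * B = (i:ℝ) * B + B := by ring
      linarith
  have hstep' : ∀ i, i < n - 1 → a (i+1) ∈ Ioc (a i) v ∧ ‖k (a (i+1)) - k (a i)‖ = ε := by
    intro i hi
    obtain ⟨h0, h1⟩ := hmain i (le_of_lt hi)
    have hin2 : (i:ℝ) ≤ (n:ℝ) - 2 := hcastn2 i (by omega)
    have hs := hstepspec (a i) h0 (le_trans h1 (mul_le_mul_of_nonneg_right hin2 hB0.le))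
    rwa [← hsucc i] at hs
  have hav : ∀ i, i ≤ n - 1 → a i ≤ v := by
    intro i hi
    rcases Nat.eq_or_lt_of_le hi with h | h
    · have h2 : n - 2 < n - 1 := by omega
      have h3 := (hstep' (n-2) h2).1.2
      have hidx : n - 2 + 1 = n - 1 := by omega
      rw [hidx] at h3
      rw [h]
      exact h3
    · exact le_of_lt (lt_of_lt_of_le (hstep' i (by omega)).1.1 (hstep' i (by omega)).1.2)
  -- condition (c)
  have hA5 : ∀ i, 1 ≤ i → i ≤ n - 2 → ∀ t ∈ Ico (0:ℝ) 1, ‖k (a i) - k t‖ = ε →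
      t = a (i-1) ∨ t = a (i+1) := by
    intro i hi1 hi2 t ht hεt
    have hin1 : i < n - 1 := by omega
    have hin1' : i - 1 < n - 1 := by omega
    have hii : i - 1 + 1 = i := by omega
    obtain ⟨hai0, haiB⟩ := hmain i (by omega)
    have haiv : a i ≤ v := hav i (by omega)
    have haim : a i ∈ Icc (-δ) δ := ⟨by linarith, by linarith⟩
    have hi1' := hstep' i hin1
    have him1 := hstep' (i-1) hin1'
    rw [hii] at him1
    have ham1 : 0 ≤ a (i-1) := (hmain (i-1) (by omega)).1
    -- k t lies in the ball of radius r
    have hin2 : (i:ℝ) ≤ (n:ℝ) - 2 := hcastn2 i hi2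
    have h4 : a i ≤ ((n:ℝ)-2) * B := le_trans haiB (mul_le_mul_of_nonneg_right hin2 hB0.le)
    have h5 : ‖w‖ * a i ≤ ((n:ℝ)-2) * (2*ε) := by
      calc ‖w‖ * a i ≤ ‖w‖ * (((n:ℝ)-2)*B) := mul_le_mul_of_nonneg_left h4 (norm_nonneg w)
        _ = ((n:ℝ)-2) * (‖w‖*B) := by ring
        _ = ((n:ℝ)-2) * (2*ε) := by rw [hwB]
    have htball : ‖k t - k 0‖ ≤ r := by
      have h1 : ‖k t - k 0‖ ≤ ‖k t - k (a i)‖ + ‖k (a i) - k 0‖ := by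
        have := dist_triangle (k t) (k (a i)) (k 0)
        simpa [dist_eq_norm] using this
      have h2 : ‖k t - k (a i)‖ = ε := by rw [norm_sub_rev]; exact hεt
      have h3 : ‖k (a i) - k 0‖ ≤ 2*‖w‖*(a i) := by
        simpa using hUp 0 h0mem (a i) haim hai0
      linarith
    have hmem : k t ∈ range k ∩ closedBall (k 0) r :=
      ⟨mem_range_self t, by rw [mem_closedBall, dist_eq_norm]; exact htball⟩
    rw [← hImage] at hmem
    obtain ⟨s, hsmem, hks⟩ := hmem
    have hεs : ‖k (a i) - k s‖ = ε := by rw [hks]; exact hεt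
    rcases lt_or_ge s (a i) with hlt | hle
    · left
      have hanti := hAnti (a i) haim
      have hsI : s ∈ Icc (-δ) (a i) := ⟨le_trans huδ hsmem.1, hlt.le⟩
      have hs2 : a (i-1) ∈ Icc (-δ) (a i) := ⟨by linarith, him1.1.1.le⟩
      have heq : s = a (i-1) := by
        apply hanti.injOn hsI hs2
        show ‖k s - k (a i)‖ = ‖k (a (i-1)) - k (a i)‖
        rw [norm_sub_rev, hεs, norm_sub_rev, him1.2]
      have hs01 : s ∈ Ico (0:ℝ) 1 := by
        rw [heq]
        refine ⟨ham1, ?_⟩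
        have := him1.1.1
        linarith
      have := hinj ht hs01 hks.symm
      rw [this, heq]
    · right
      have hmono := hMono (a i) haim
      have hsne : a i < s := by
        rcases eq_or_lt_of_le hle with h | h
        · exfalso
          rw [← h, sub_self, norm_zero] at hεs
          linarith
        · exact h
      have hsI : s ∈ Icc (a i) δ := ⟨hle, le_trans hsmem.2 hvδ⟩
      have hs2 : a (i+1) ∈ Icc (a i) δ := ⟨hi1'.1.1.le, le_trans hi1'.1.2 hvδ⟩
      have heq : s = a (i+1) := by
        apply hmono.injOn hsI hs2
        show ‖k s - k (a i)‖ = ‖k (a (i+1)) - k (a i)‖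
        rw [norm_sub_rev, hεs, hi1'.2]
      have hs01 : s ∈ Ico (0:ℝ) 1 := by
        constructor
        · linarith
        · have := hsmem.2
          linarith
      have := hinj ht hs01 hks.symm
      rw [this, heq]
  -- assemble everything
  refine ⟨r, u, v, ε, hrpos, huneg, hvpos, hεpos, hImage, haDeriv,
    a, ha0, ?_, ?_, ?_, hA5⟩
  · intro i hi
    exact ⟨le_trans huneg.le (hmain i hi).1, hav i hi⟩
  · intro i hi
    exact (hstep' i hi).1.1
  · intro i hi
    rw [norm_sub_rev]
    exact (hstep' i hi).2
end

section
/- Let J be an interval and let k : J → ℝ³ be continuously differentiable with k'(s) · k'(t) > 0 (Euclidean inner product) for all s, t ∈ J. Then for any fixed t' ∈ J, the function t ↦ ‖k(t) − k(t')‖ is strictly increasing in t for t ∈ J with t > t'; more precisely, the derivative with respect to t of ‖k(t) − k(t')‖² is strictly positive for all t ∈ J with t > t'. -/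
/-- **Lemma 2(a)** of the paper. If `k : J → ℝ³` is C¹ on an interval `J`
(with derivative `k'`) and the tangent vectors at any two points of `J` have
strictly positive inner product, then for any fixed `t' ∈ J` the chord length
`t ↦ ‖k t - k t'‖` is strictly increasing for `t ∈ J`, `t > t'`; more
precisely, `t ↦ ‖k t - k t'‖²` has strictly positive derivative at every such
`t`. -/
theorem chord_length_strictMono_of_pos_inner_deriv
    (J : Set ℝ) (hJ : J.OrdConnected)
    (k k' : ℝ → EuclideanSpace ℝ (Fin 3))
    (hderiv : ∀ t ∈ J, HasDerivWithinAt k (k' t) J t)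
    (hk' : ContinuousOn k' J)
    (hpos : ∀ s ∈ J, ∀ t ∈ J, (0 : ℝ) < inner ℝ (k' s) (k' t)) :
    ∀ t' ∈ J,
      StrictMonoOn (fun t => ‖k t - k t'‖) (J ∩ Set.Ioi t') ∧
      ∀ t ∈ J, t' < t →
        ∃ d' : ℝ, 0 < d' ∧
          HasDerivWithinAt (fun s => ‖k s - k t'‖ ^ 2) d' J t := by
  intro t' ht'
  have hJconv : Convex ℝ J := hJ.convex
  -- Step 1: for `t ∈ J`, `t' < t`, we have `0 < ⟪k t - k t', k' t⟫`.
  have key : ∀ t ∈ J, t' < t → (0 : ℝ) < inner ℝ (k t - k t') (k' t) := by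
    intro t ht htt
    set g : ℝ → ℝ := fun s => inner ℝ (k s - k t') (k' t) with hg
    have hgderiv : ∀ s ∈ J, HasDerivWithinAt g (inner ℝ (k' s) (k' t)) J s := by
      intro s hs
      have h1 : HasDerivWithinAt (fun u => k u - k t') (k' s) J s :=
        (hderiv s hs).sub_const _
      have h2 : HasDerivWithinAt (fun _ : ℝ => k' t) (0 : EuclideanSpace ℝ (Fin 3)) J s :=
        hasDerivWithinAt_const _ _ _
      have := h1.inner ℝ h2
      simpa using this
    have hmono : StrictMonoOn g J := by
      apply strictMonoOn_of_hasDerivWithinAt_pos hJconv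
      · intro s hs
        exact (hgderiv s hs).continuousWithinAt
      · intro s hs
        exact ((hgderiv s (interior_subset hs)).mono interior_subset)
      · intro s hs
        exact hpos s (interior_subset hs) t ht
    have h0 : g t' = 0 := by simp [hg]
    have := hmono ht' ht htt
    rwa [h0] at this
  -- Step 2: derivative of squared chord length.
  have hsqderiv : ∀ t ∈ J,
      HasDerivWithinAt (fun s => ‖k s - k t'‖ ^ 2)
        (2 * inner ℝ (k t - k t') (k' t)) J t := by
    intro t ht
    have h1 : HasDerivWithinAt (fun u => k u - k t') (k' t) J t :=
      (hderiv t ht).sub_const _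
    have h2 := h1.inner ℝ h1
    have heq : (fun s => ‖k s - k t'‖ ^ 2) =
        fun s => (inner ℝ (k s - k t') (k s - k t') : ℝ) := by
      funext s
      rw [real_inner_self_eq_norm_sq]
    rw [heq]
    refine h2.congr_deriv ?_
    rw [real_inner_comm]
    ring
  constructor
  · -- strict monotonicity of the chord length
    have hsqmono : StrictMonoOn (fun s => ‖k s - k t'‖ ^ 2) (J ∩ Set.Ioi t') := by
      apply strictMonoOn_of_hasDerivWithinAt_pos
        (hJconv.inter (convex_Ioi t'))
        (f' := fun t => 2 * inner ℝ (k t - k t') (k' t))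
      · intro s hs
        exact ((hsqderiv s hs.1).mono Set.inter_subset_left).continuousWithinAt
      · intro s hs
        have hs' := interior_subset hs
        exact ((hsqderiv s hs'.1).mono Set.inter_subset_left).mono interior_subset
      · intro s hs
        have hs' := interior_subset hs
        have := key s hs'.1 hs'.2
        linarith
    intro a ha b hb hab
    have h2 := hsqmono ha hb hab
    simp only at h2 ⊢
    exact lt_of_pow_lt_pow_left₀ 2 (norm_nonneg _) h2
  · intro t ht htt
    exact ⟨2 * inner ℝ (k t - k t') (k' t), by linarith [key t ht htt], hsqderiv t ht⟩
end

section
/- Let J be an interval containing 0 and let k : J → ℝ³ be continuously differentiable with k(0) = 0 and k'(s) · k'(t) > 0 (Euclidean inner product) for all s, t ∈ J. Then for every t ∈ J with t > 0, one has k(t) · k'(t) > 0. -/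
/-- The key computation in Lemma 2(a) of the paper. If `k : J → ℝ³` is C¹ on
an interval `J` containing `0` (with derivative `k'`), `k 0 = 0`, and
`⟪k' s, k' t⟫ > 0` for all `s, t ∈ J`, then `⟪k t, k' t⟫ > 0` for every
`t ∈ J` with `t > 0`. -/
theorem inner_pos_of_pos_inner_deriv
    (J : Set ℝ) (hJ : J.OrdConnected) (h0J : (0 : ℝ) ∈ J)
    (k k' : ℝ → EuclideanSpace ℝ (Fin 3))
    (hderiv : ∀ t ∈ J, HasDerivWithinAt k (k' t) J t)
    (hk' : ContinuousOn k' J)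
    (hk0 : k 0 = 0)
    (hpos : ∀ s ∈ J, ∀ t ∈ J, (0 : ℝ) < inner ℝ (k' s) (k' t)) :
    ∀ t ∈ J, 0 < t → (0 : ℝ) < inner ℝ (k t) (k' t) := by
  intro t ht ht0
  set c := k' t with hc
  have hsub : Set.Icc (0 : ℝ) t ⊆ J := hJ.out h0J ht
  have hmono : StrictMonoOn (fun s => (inner ℝ (k s) c : ℝ)) (Set.Icc 0 t) := by
    apply strictMonoOn_of_hasDerivWithinAt_pos (f' := fun s => (inner ℝ (k' s) c : ℝ))
      (convex_Icc 0 t)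
    · intro x hx
      exact (((hderiv x (hsub hx)).mono hsub).continuousWithinAt.inner
        (continuousWithinAt_const))
    · intro x hx
      rw [interior_Icc] at hx ⊢
      have h := ((hderiv x (hsub (Set.Ioo_subset_Icc_self hx))).mono
        (Set.Ioo_subset_Icc_self.trans hsub)).inner ℝ
        (hasDerivWithinAt_const _ _ c)
      simpa using h
    · intro x hx
      rw [interior_Icc] at hx
      exact hpos x (hsub (Set.Ioo_subset_Icc_self hx)) t ht
  have := hmono (Set.left_mem_Icc.2 ht0.le) (Set.right_mem_Icc.2 ht0.le) ht0
  simpa [hk0] using this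
end

section
/- Let n ≥ 3, let k : ℝ → ℝ³ be continuous of period 1, injective on [0,1), with k(0) = 0, and set d(s,t) = ‖k(s) − k(t)‖. Suppose ε > 0 and 0 = a₀ < a₁ < ⋯ < a_{n-1} < 1 satisfy: d(a_{i-1}, a_i) = ε for i = 1, …, n−1; the function t ↦ d(0,t) is strictly increasing on [0, a_{n-1}] (so δ := d(0, a_{n-1}) > ε); for each i = 1, …, n−2, if t ∈ [0,1) and d(a_i, t) = ε then t ∈ {a_{i-1}, a_{i+1}}. Suppose p ∈ (a_{n-1}, 1) satisfies d(0,p) < ε and d(0,t) ≥ d(0,p) for all t ∈ [a₁, p]. Let B = {(t₁, …, t_{n-1}) : a₁ ≤ t₁ ≤ ⋯ ≤ t_{n-1} ≤ p} ⊂ ℝ^{n-1}, and define φ : B → ℝⁿ by φ(t)_i = d(t_{i-1}, t_i) for i = 1, …, n, where t₀ := 0 and t_n := 1 (so φ(t)_n = d(t_{n-1}, 0) by periodicity). Let ψ₁ : ℝⁿ → ℝⁿ be the orthogonal projection ψ₁(y) = y − ((Σᵢ yᵢ)/n)·e onto the hyperplane P = {z : Σ zᵢ = 0}, where e = (1, …,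 1), let ψ₂(z) = z/‖z‖ for z ≠ 0, and set g = ψ₂ ∘ ψ₁ ∘ φ wherever defined. Let a = (a₁, …, a_{n-1}) and assume ψ₁(φ(t)) ≠ 0 for all t ∈ ∂B. Then for every t in the boundary ∂B of the simplex B, g(t) = g(a) implies t = a. -/
/-!
If `g t = g a`, then `ψ₁ (φ t)` is a positive multiple `r • ψ₁ (φ a)`, so the chord vectors
`φ t` and `φ a` have proportional differences. Since all chords of `a` but the last one equal
`ε`, the chords of `t` from the second to the `(n-1)`-st all equal the first one, `d(0, t₁)`,
while the last one is strictly longer, `d(t_{n-1}, 0) = d(0, t₁) + r (δ - ε)`.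
On a face `t_{i-1} = t_i` this forces `d(0, t₁) = 0`, contradicting injectivity; on the face
`t_{n-1} = p` it contradicts the minimality of `d(0, p)`. Hence `t₁ = a₁`, so the first chord
is `ε`, and the uniqueness of `ε`-neighbours along the chain propagates `tᵢ = aᵢ`.
-/

open Set

theorem exists_pos_smul_eq_of_inv_norm_smul_eq {F : Type*} [NormedAddCommGroup F]
    [NormedSpace ℝ F] {x y : F} (hx : x ≠ 0) (hy : y ≠ 0) (h : ‖x‖⁻¹ • x = ‖y‖⁻¹ • y) :
    ∃ r : ℝ, 0 < r ∧ x = r • y := by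
  obtain ⟨r, hr, hyx⟩ :=
    ((sameRay_iff_inv_norm_smul_eq_of_ne hx hy).2 h).symm.exists_pos_left hy hx
  exact ⟨r, hr, hyx.symm⟩

theorem monotoneOn_Icc_of_le_succ {β : Type*} [Preorder β] {m : ℕ} {t : ℕ → β}
    (h : ∀ i, 2 ≤ i → i ≤ m → t (i - 1) ≤ t i) : MonotoneOn t (Icc 1 m) := by
  refine monotoneOn_of_le_succ ordConnected_Icc fun i _ hi hsi => ?_
  simp only [Order.succ_eq_add_one, mem_Icc] at hi hsi ⊢
  simpa using h (i + 1) (by omega) hsi.2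

section Chords

variable {E : Type*} [NormedAddCommGroup E] {k : ℝ → E} {n m : ℕ} {t a : ℕ → ℝ} {ε r : ℝ}

def chordLength (k : ℝ → E) (n : ℕ) (t : ℕ → ℝ) (j : ℕ) : ℝ :=
  ‖k (if j = 0 then 0 else t j) - k (if j + 1 = n then 1 else t (j + 1))‖

theorem chordLength_zero (hn : 1 < n) : chordLength k n t 0 = ‖k 0 - k (t 1)‖ := by
  simp [chordLength, show 1 ≠ n by omega]

theorem chordLength_of_ne_zero {j : ℕ} (hj0 : j ≠ 0) (hjn : j + 1 < n) :
    chordLength k n t j = ‖k (t j) - k (t (j + 1))‖ := by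
  simp [chordLength, hj0, show j + 1 ≠ n by omega]

theorem chordLength_pred (hk1 : k 1 = k 0) (hn : 1 < n) :
    chordLength k n t (n - 1) = ‖k (t (n - 1)) - k 0‖ := by
  simp [chordLength, show n - 1 ≠ 0 by omega, show n - 1 + 1 = n by omega, hk1]

theorem chordLength_chain (ha0 : a 0 = 0)
    (hchain : ∀ i < n - 1, ‖k (a i) - k (a (i + 1))‖ = ε) {j : ℕ} (hj : j < n - 1) :
    chordLength k n a j = ε := by
  rcases Nat.eq_zero_or_pos j with rfl | hj0
  · rw [chordLength_zero (by omega), ← ha0, hchain 0 hj]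
  · rw [chordLength_of_ne_zero hj0.ne' (by omega), hchain j hj]

theorem chord_eq_first_chord_of_sub_eq (ha0 : a 0 = 0)
    (hchain : ∀ i < n - 1, ‖k (a i) - k (a (i + 1))‖ = ε)
    (hrel : ∀ j < n, chordLength k n t j - chordLength k n t 0 =
      r * (chordLength k n a j - chordLength k n a 0))
    {j : ℕ} (hj1 : 1 ≤ j) (hjn : j < n - 1) :
    ‖k (t j) - k (t (j + 1))‖ = ‖k 0 - k (t 1)‖ := by
  have h := hrel j (by omega)
  rw [chordLength_chain ha0 hchain hjn, chordLength_chain ha0 hchain (by omega),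
    chordLength_of_ne_zero (by omega) (by omega), chordLength_zero (by omega)] at h
  linarith

theorem last_chord_eq_of_sub_eq (hk1 : k 1 = k 0) (hn : 2 ≤ n) (ha0 : a 0 = 0)
    (hchain : ∀ i < n - 1, ‖k (a i) - k (a (i + 1))‖ = ε)
    (hrel : ∀ j < n, chordLength k n t j - chordLength k n t 0 =
      r * (chordLength k n a j - chordLength k n a 0)) :
    ‖k (t (n - 1)) - k 0‖ = ‖k 0 - k (t 1)‖ + r * (‖k (a (n - 1)) - k 0‖ - ε) := by
  have h := hrel (n - 1) (by omega)
  rw [chordLength_pred hk1 (by omega), chordLength_pred hk1 (by omega),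
    chordLength_chain ha0 hchain (by omega), chordLength_zero (by omega)] at h
  linarith

theorem apply_one_eq_of_boundary_chords {x p c : ℝ} (hinj : InjOn k (Ico 0 1)) (hx : 0 < x)
    (hp : p < 1) (hpmin : ∀ s ∈ Icc x p, ‖k p - k 0‖ ≤ ‖k s - k 0‖)
    (ht1 : x ≤ t 1) (ht1p : t 1 ≤ p)
    (hface : t 1 = x ∨ (∃ i, 2 ≤ i ∧ i ≤ m ∧ t (i - 1) = t i) ∨ t m = p)
    (hinner : ∀ j, 1 ≤ j → j < m → ‖k (t j) - k (t (j + 1))‖ = ‖k 0 - k (t 1)‖)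
    (hlast : ‖k (t m) - k 0‖ = ‖k 0 - k (t 1)‖ + c) (hc : 0 < c) : t 1 = x := by
  rcases hface with h | ⟨i, hi2, him, hti⟩ | htm
  · exact h
  · have h := hinner (i - 1) (by omega) (by omega)
    rw [Nat.sub_add_cancel (by omega), hti, sub_self, norm_zero] at h
    have ht10 : t 1 = 0 := hinj ⟨by linarith, by linarith⟩ ⟨le_rfl, one_pos⟩
      (sub_eq_zero.1 (norm_eq_zero.1 h.symm)).symm
    linarith
  · have := hpmin (t 1) ⟨ht1, ht1p⟩
    rw [htm, norm_sub_rev (k 0)] at hlast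
    linarith

theorem eqOn_Icc_of_chord_eq (ha : StrictMonoOn a (Iic m))
    (huniq : ∀ i, 1 ≤ i → i < m → ∀ s ∈ Ico (0 : ℝ) 1,
      ‖k (a i) - k s‖ = ε → s = a (i - 1) ∨ s = a (i + 1))
    (ht : MonotoneOn t (Icc 1 m)) (ht0 : 0 ≤ t 1) (htm : t m < 1) (h1 : t 1 = a 1)
    (hchord : ∀ i, 1 ≤ i → i < m → ‖k (t i) - k (t (i + 1))‖ = ε) :
    EqOn t a (Icc 1 m) := by
  rintro i ⟨hi1, him⟩
  induction i, hi1 using Nat.le_induction with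
  | base => exact h1
  | succ i hi1 ih =>
    have hti : t i = a i := ih (by omega)
    have ht_mem : t (i + 1) ∈ Ico (0 : ℝ) 1 :=
      ⟨ht0.trans (ht ⟨le_rfl, by omega⟩ ⟨by omega, him⟩ (by omega)),
        (ht ⟨by omega, him⟩ ⟨by omega, le_rfl⟩ him).trans_lt htm⟩
    refine (huniq i hi1 (by omega) _ ht_mem (by rw [← hti, hchord i hi1 (by omega)])).resolve_left
      fun h => ?_
    have hle : t i ≤ t (i + 1) := ht ⟨hi1, by omega⟩ ⟨by omega, him⟩ (by omega)
    have hlt : a (i - 1) < a i := ha (mem_Iic.2 (by omega)) (mem_Iic.2 (by omega)) (by omega)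
    rw [hti, h] at hle
    exact hle.not_gt hlt

end Chords

theorem boundary_map_value_only_at_chain_point_general
    (n : ℕ) (hn : 3 ≤ n)
    (k : ℝ → EuclideanSpace ℝ (Fin 3))
    (hper : ∀ t : ℝ, k (t + 1) = k t)
    (hinj : Set.InjOn k (Set.Ico (0 : ℝ) 1))
    (ε : ℝ)
    (a : ℕ → ℝ) (ha0 : a 0 = 0)
    (hamono : ∀ i < n - 1, a i < a (i + 1))
    (hchain : ∀ i < n - 1, ‖k (a i) - k (a (i + 1))‖ = ε)
    (hδ : ε < ‖k (a (n - 1)) - k 0‖)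
    (huniq : ∀ i, 1 ≤ i → i ≤ n - 2 → ∀ t ∈ Set.Ico (0 : ℝ) 1,
      ‖k (a i) - k t‖ = ε → t = a (i - 1) ∨ t = a (i + 1))
    (p : ℝ) (hp1 : a (n - 1) < p) (hp2 : p < 1)
    (hpmin : ∀ t ∈ Set.Icc (a 1) p, ‖k p - k 0‖ ≤ ‖k t - k 0‖)
    -- the simplex `B` (in coordinates `t 1, …, t (n-1)`) and its boundary
    (B : Set (ℕ → ℝ))
    (hB : B = {t : ℕ → ℝ | a 1 ≤ t 1 ∧
      (∀ i, 2 ≤ i → i ≤ n - 1 → t (i - 1) ≤ t i) ∧ t (n - 1) ≤ p})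
    (bdryB : Set (ℕ → ℝ))
    (hbdryB : bdryB = {t ∈ B | t 1 = a 1 ∨
      (∃ i, 2 ≤ i ∧ i ≤ n - 1 ∧ t (i - 1) = t i) ∨ t (n - 1) = p})
    -- the chord length map `φ`, with the conventions `t₀ = 0`, `t_n = 1`
    (φ : (ℕ → ℝ) → EuclideanSpace ℝ (Fin n))
    (hφ : ∀ t : ℕ → ℝ, φ t = fun j : Fin n =>
      ‖k (if (j : ℕ) = 0 then 0 else t j) -
        k (if (j : ℕ) + 1 = n then 1 else t ((j : ℕ) + 1))‖)
    -- the orthogonal projection onto the hyperplane `P = {Σ zᵢ = 0}`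
    (ψ₁ : EuclideanSpace ℝ (Fin n) → EuclideanSpace ℝ (Fin n))
    (hψ₁ : ∀ y, ψ₁ y = fun j : Fin n => y j - (∑ i, y i) / n)
    -- `g = ψ₂ ∘ ψ₁ ∘ φ`, where `ψ₂ z = z / ‖z‖`
    (g : (ℕ → ℝ) → EuclideanSpace ℝ (Fin n))
    (hg : ∀ t, g t = ‖ψ₁ (φ t)‖⁻¹ • ψ₁ (φ t))
    (hnz : ∀ t ∈ bdryB, ψ₁ (φ t) ≠ 0) :
    ∀ t ∈ bdryB, g t = g a → ∀ i, 1 ≤ i → i ≤ n - 1 → t i = a i := by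
  intro t ht hgt
  have hk1 : k 1 = k 0 := by simpa using hper 0
  have ha : StrictMonoOn a (Iic (n - 1)) := strictMonoOn_Iic_of_lt_succ hamono
  have ha1 : 0 < a 1 := ha0 ▸ ha (mem_Iic.2 (Nat.zero_le _)) (mem_Iic.2 (by omega)) one_pos
  have haB : a ∈ bdryB := by
    rw [hbdryB, hB]
    refine ⟨⟨le_rfl, fun i _ hin => ?_, hp1.le⟩, Or.inl rfl⟩
    exact (ha (mem_Iic.2 (by omega)) hin (by omega)).le
  obtain ⟨r, hr, hψ⟩ := exists_pos_smul_eq_of_inv_norm_smul_eq (hnz t ht) (hnz a haB)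
    (by rw [← hg, ← hg, hgt])
  have hrel : ∀ j < n, chordLength k n t j - chordLength k n t 0 =
      r * (chordLength k n a j - chordLength k n a 0) := by
    have hφ' (s : ℕ → ℝ) (j : Fin n) : φ s j = chordLength k n s j := congrFun (hφ s) j
    have hcoord (j : Fin n) := congrFun (congrArg WithLp.ofLp hψ) j
    simp only [hψ₁, PiLp.smul_apply, hφ', smul_eq_mul] at hcoord
    intro j hj
    linear_combination hcoord ⟨j, hj⟩ - hcoord ⟨0, by omega⟩
  rw [hbdryB, hB] at ht
  obtain ⟨⟨ht1, htmono, htp⟩, hface⟩ := ht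
  have htm := monotoneOn_Icc_of_le_succ htmono
  have ht1p : t 1 ≤ p := (htm ⟨le_rfl, by omega⟩ ⟨by omega, le_rfl⟩ (by omega)).trans htp
  have hinner := fun j => chord_eq_first_chord_of_sub_eq ha0 hchain hrel (j := j)
  have hfirst : t 1 = a 1 :=
    apply_one_eq_of_boundary_chords hinj ha1 hp2 hpmin ht1 ht1p hface hinner
      (last_chord_eq_of_sub_eq hk1 (by omega) ha0 hchain hrel) (mul_pos hr (by linarith))
  have hchord : ∀ j, 1 ≤ j → j < n - 1 → ‖k (t j) - k (t (j + 1))‖ = ε := fun j hj1 hjn => by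
    rw [hinner j hj1 hjn, hfirst, ← ha0, hchain 0 (by omega)]
  exact fun i hi1 hin => eqOn_Icc_of_chord_eq ha (fun i hi1 hin => huniq i hi1 (by omega)) htm
    (by linarith) (by linarith) hfirst hchord ⟨hi1, hin⟩

/-- **Lemma 3** of the paper. With `k` a continuous closed curve of period 1,
injective on `[0,1)`, `k 0 = 0`, an `ε`-chain `0 = a₀ < a₁ < ⋯ < a_{n-1} < 1`
as in Lemma 2, and `p ∈ (a_{n-1}, 1)` with `d(0,p) < ε` and
`d(0,t) ≥ d(0,p)` on `[a₁,p]`, consider the simplex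
`B = {a₁ ≤ t₁ ≤ ⋯ ≤ t_{n-1} ≤ p}`, its boundary `∂B` (the union of the faces
`{t₁ = a₁}`, `{t_{i-1} = t_i}`, `{t_{n-1} = p}`), the chord-length map `φ`
with `φ(t)ᵢ = d(t_{i-1}, t_i)` (`t₀ := 0`, `t_n := 1`), the orthogonal
projection `ψ₁` onto the hyperplane `{Σ zᵢ = 0}`, and `g = ψ₂ ∘ ψ₁ ∘ φ` with
`ψ₂` the radial projection to the unit sphere. If `ψ₁(φ t) ≠ 0` on `∂B`,
then the only point `t ∈ ∂B` with `g t = g a` is `t = a` itself. -/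
theorem boundary_map_value_only_at_chain_point
    (n : ℕ) (hn : 3 ≤ n)
    (k : ℝ → EuclideanSpace ℝ (Fin 3))
    (hk : Continuous k)
    (hper : ∀ t : ℝ, k (t + 1) = k t)
    (hinj : Set.InjOn k (Set.Ico (0 : ℝ) 1))
    (hk0 : k 0 = 0)
    (ε : ℝ) (hε : 0 < ε)
    (a : ℕ → ℝ) (ha0 : a 0 = 0)
    (hamono : ∀ i < n - 1, a i < a (i + 1))
    (halt : a (n - 1) < 1)
    (hchain : ∀ i < n - 1, ‖k (a i) - k (a (i + 1))‖ = ε)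
    (hincr : StrictMonoOn (fun t => ‖k t - k 0‖) (Set.Icc 0 (a (n - 1))))
    (hδ : ε < ‖k (a (n - 1)) - k 0‖)
    (huniq : ∀ i, 1 ≤ i → i ≤ n - 2 → ∀ t ∈ Set.Ico (0 : ℝ) 1,
      ‖k (a i) - k t‖ = ε → t = a (i - 1) ∨ t = a (i + 1))
    (p : ℝ) (hp1 : a (n - 1) < p) (hp2 : p < 1)
    (hpε : ‖k p - k 0‖ < ε)
    (hpmin : ∀ t ∈ Set.Icc (a 1) p, ‖k p - k 0‖ ≤ ‖k t - k 0‖)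
    -- the simplex `B` (in coordinates `t 1, …, t (n-1)`) and its boundary
    (B : Set (ℕ → ℝ))
    (hB : B = {t : ℕ → ℝ | a 1 ≤ t 1 ∧
      (∀ i, 2 ≤ i → i ≤ n - 1 → t (i - 1) ≤ t i) ∧ t (n - 1) ≤ p})
    (bdryB : Set (ℕ → ℝ))
    (hbdryB : bdryB = {t ∈ B | t 1 = a 1 ∨
      (∃ i, 2 ≤ i ∧ i ≤ n - 1 ∧ t (i - 1) = t i) ∨ t (n - 1) = p})
    -- the chord length map `φ`, with the conventions `t₀ = 0`, `t_n = 1`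
    (φ : (ℕ → ℝ) → EuclideanSpace ℝ (Fin n))
    (hφ : ∀ t : ℕ → ℝ, φ t = fun j : Fin n =>
      ‖k (if (j : ℕ) = 0 then 0 else t j) -
        k (if (j : ℕ) + 1 = n then 1 else t ((j : ℕ) + 1))‖)
    -- the orthogonal projection onto the hyperplane `P = {Σ zᵢ = 0}`
    (ψ₁ : EuclideanSpace ℝ (Fin n) → EuclideanSpace ℝ (Fin n))
    (hψ₁ : ∀ y, ψ₁ y = fun j : Fin n => y j - (∑ i, y i) / n)
    -- `g = ψ₂ ∘ ψ₁ ∘ φ`, where `ψ₂ z = z / ‖z‖`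
    (g : (ℕ → ℝ) → EuclideanSpace ℝ (Fin n))
    (hg : ∀ t, g t = ‖ψ₁ (φ t)‖⁻¹ • ψ₁ (φ t))
    (hnz : ∀ t ∈ bdryB, ψ₁ (φ t) ≠ 0) :
    ∀ t ∈ bdryB, g t = g a → ∀ i, 1 ≤ i → i ≤ n - 1 → t i = a i :=
  boundary_map_value_only_at_chain_point_general n hn k hper hinj ε a ha0 hamono hchain hδ huniq p
    hp1 hp2 hpmin B hB bdryB hbdryB φ hφ ψ₁ hψ₁ g hg hnz
end

section
/- Let n ≥ 3, let k : ℝ → ℝ³ be continuous of period 1, injective on [0,1), with k(0) = 0, and set d(s,t) = ‖k(s) − k(t)‖. Suppose ε > 0 and 0 = a₀ < a₁ < ⋯ < a_{n-1} < 1 satisfy d(a_{i-1}, a_i) = ε for i = 1, …, n−1 and δ := d(0, a_{n-1}) > ε. Assume k is continuously differentiable in a neighborhood of each aᵢ, that φ(t)_i = d(t_{i-1}, t_i) (with t₀ := 0, t_n := 1, and φ(t)_n = d(t_{n-1}, 0)) is differentiable at a = (a₁, …, a_{n-1}), and that the partial derivatives c_{ii} := ∂/∂tᵢ d(a_{i-1},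 tᵢ)|_{tᵢ = aᵢ} are strictly positive for i = 1, …, n−1. Let ψ₁ : ℝⁿ → ℝⁿ, ψ₁(y) = y − ((Σᵢ yᵢ)/n)·e with e = (1, …, 1), ψ₂(z) = z/‖z‖, and f = ψ₂ ∘ ψ₁ ∘ φ; assume ψ₁(φ(a)) ≠ 0. Then the derivative of f at a, restricted to the tangent space {v ∈ ℝ^{n-1} : v₁ = 0} of the face E₁ = {t₁ = a₁}, is injective; i.e., a is a regular point of the restriction of f to E₁. -/
/-- **Lemma 4** of the paper. With an `ε`-chain `0 = a₀ < ⋯ < a_{n-1} < 1` on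
the closed curve `k` (period 1, `k 0 = 0`), `δ = d(0, a_{n-1}) > ε`, `k` C¹
near each `aᵢ`, the chord-length map
`φ(t) = (d(0,t₁), d(t₁,t₂), …, d(t_{n-2},t_{n-1}), d(t_{n-1},1))`
differentiable at `a = (a₁, …, a_{n-1})` with positive "diagonal" partial
derivatives `cᵢᵢ`, the orthogonal projection `ψ₁` onto `{Σ zᵢ = 0}` and
`f = ψ₂ ∘ ψ₁ ∘ φ` (`ψ₂` the radial projection), if `ψ₁ (φ a) ≠ 0` then the
derivative of `f` at `a` is injective on the tangent space `{v : v₁ = 0}` of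
the face `E₁ = {t₁ = a₁}`; i.e. `a` is a regular point of `f|E₁`. -/
theorem chain_point_is_regular_point
    (n : ℕ) (hn : 3 ≤ n)
    (k : ℝ → EuclideanSpace ℝ (Fin 3))
    (hk : Continuous k)
    (hper : ∀ t : ℝ, k (t + 1) = k t)
    (hinj : Set.InjOn k (Set.Ico (0 : ℝ) 1))
    (hk0 : k 0 = 0)
    (ε : ℝ) (hε : 0 < ε)
    (a : ℕ → ℝ) (ha0 : a 0 = 0)
    (hamono : ∀ i < n - 1, a i < a (i + 1))
    (halt : a (n - 1) < 1)
    (hchain : ∀ i < n - 1, ‖k (a i) - k (a (i + 1))‖ = ε)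
    (hδ : ε < ‖k (a (n - 1)) - k 0‖)
    (hsmooth : ∀ i ≤ n - 1, ∃ U : Set ℝ, IsOpen U ∧ a i ∈ U ∧ ContDiffOn ℝ 1 k U)
    -- extension of a parameter vector `(t₁, …, t_{n-1})` by `t₀ = 0`, `t_n = 1`
    (ext : EuclideanSpace ℝ (Fin (n - 1)) → ℕ → ℝ)
    (hext0 : ∀ t, ext t 0 = 0)
    (hextn : ∀ t, ext t n = 1)
    (hexti : ∀ t (j : Fin (n - 1)), ext t ((j : ℕ) + 1) = t j)
    -- the chord-length map `φ`
    (φ : EuclideanSpace ℝ (Fin (n - 1)) → EuclideanSpace ℝ (Fin n))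
    (hφ : ∀ t, φ t = fun j : Fin n => ‖k (ext t (j : ℕ)) - k (ext t ((j : ℕ) + 1))‖)
    -- the point `a = (a₁, …, a_{n-1})`
    (A : EuclideanSpace ℝ (Fin (n - 1))) (hA : ∀ j : Fin (n - 1), A j = a ((j : ℕ) + 1))
    (hdiff : DifferentiableAt ℝ φ A)
    -- positivity of the diagonal entries `cᵢᵢ` of the Jacobian of `φ` at `a`
    (hcpos : ∀ i, 1 ≤ i → i ≤ n - 1 →
      ∃ c : ℝ, 0 < c ∧ HasDerivAt (fun s => ‖k s - k (a (i - 1))‖) c (a i))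
    -- orthogonal projection onto the hyperplane `P = {Σ zᵢ = 0}`
    (ψ₁ : EuclideanSpace ℝ (Fin n) → EuclideanSpace ℝ (Fin n))
    (hψ₁ : ∀ y, ψ₁ y = fun j : Fin n => y j - (∑ i, y i) / n)
    -- `f = ψ₂ ∘ ψ₁ ∘ φ`, where `ψ₂ z = z / ‖z‖`
    (f : EuclideanSpace ℝ (Fin (n - 1)) → EuclideanSpace ℝ (Fin n))
    (hf : ∀ t, f t = ‖ψ₁ (φ t)‖⁻¹ • ψ₁ (φ t))
    (hnz : ψ₁ (φ A) ≠ 0) :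
    Set.InjOn (fderiv ℝ f A)
      {v : EuclideanSpace ℝ (Fin (n - 1)) | v ⟨0, by omega⟩ = 0} := by
  classical
  -- ψ₁ as a continuous linear map
  let ψlin : EuclideanSpace ℝ (Fin n) →ₗ[ℝ] EuclideanSpace ℝ (Fin n) :=
    { toFun := fun y => WithLp.toLp 2 (fun j => y j - (∑ i, y i) / n)
      map_add' := by
        intro x y; ext j
        simp only [PiLp.add_apply]
        rw [Finset.sum_add_distrib]
        ring
      map_smul' := by
        intro c x; ext j
        simp only [PiLp.smul_apply, smul_eq_mul, RingHom.id_apply]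
        rw [← Finset.mul_sum]
        ring }
  let ψC : EuclideanSpace ℝ (Fin n) →L[ℝ] EuclideanSpace ℝ (Fin n) :=
    ψlin.toContinuousLinearMap
  have hψCapp : ∀ y (j : Fin n), ψC y j = y j - (∑ i, y i) / n := fun y j => rfl
  have hψC : ∀ y, ψ₁ y = ψC y := by
    intro y; ext j; rw [hψ₁]; rfl
  set L := fderiv ℝ φ A with hLdef
  -- ext of A
  have hextA : ∀ mv, mv ≤ n - 1 → ext A mv = a mv := by
    intro mv hmv
    rcases mv with _ | p
    · rw [hext0, ha0]
    · have hp : p < n - 1 := by omega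
      have h1 := hexti A ⟨p, hp⟩
      have h2 := hA ⟨p, hp⟩
      rw [h1, h2]
  -- φ A has all components before the last equal to ε
  have hφAε : ∀ j : Fin n, (j : ℕ) < n - 1 → φ A j = ε := by
    intro j hj
    rw [hφ]
    show ‖k (ext A (j : ℕ)) - k (ext A ((j : ℕ) + 1))‖ = ε
    rw [hextA (j : ℕ) (by omega), hextA ((j : ℕ) + 1) (by omega)]
    exact hchain (j : ℕ) hj
  -- column structure of the Jacobian L
  have hcol : ∀ i : Fin (n - 1),
      (0 < L (EuclideanSpace.single i 1) ⟨(i : ℕ), by omega⟩) ∧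
      (∀ j : Fin n, (j : ℕ) ≠ (i : ℕ) → (j : ℕ) ≠ (i : ℕ) + 1 →
        L (EuclideanSpace.single i 1) j = 0) := by
    intro i
    set v : EuclideanSpace ℝ (Fin (n - 1)) := EuclideanSpace.single i 1 with hv
    -- the line through A in direction v
    have hAv : HasDerivAt (fun s : ℝ => A + s • v) v 0 := by
      simpa using ((hasDerivAt_id (0:ℝ)).smul_const v).const_add A
    have hφA' : HasFDerivAt φ L ((fun s : ℝ => A + s • v) 0) := by
      simpa using hdiff.hasFDerivAt
    have hφγ : HasDerivAt (fun s : ℝ => φ (A + s • v)) (L v) 0 :=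
      hφA'.comp_hasDerivAt 0 hAv
    have hcomp : ∀ j : Fin n, HasDerivAt (fun s : ℝ => φ (A + s • v) j) (L v j) 0 := by
      intro j
      exact (EuclideanSpace.proj j).hasFDerivAt.comp_hasDerivAt 0 hφγ
    -- ext along the line
    have hγapp : ∀ (s : ℝ) (p : Fin (n - 1)), (A + s • v) p = A p + s * (if p = i then 1 else 0) := by
      intro s p
      simp [hv, PiLp.add_apply, PiLp.smul_apply, EuclideanSpace.single_apply]
    have hextγ : ∀ (s : ℝ) (mv : ℕ), mv ≤ n - 1 → mv ≠ (i : ℕ) + 1 →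
        ext (A + s • v) mv = a mv := by
      intro s mv hmv hne
      rcases mv with _ | p
      · rw [hext0, ha0]
      · have hp : p < n - 1 := by omega
        rw [hexti (A + s • v) ⟨p, hp⟩, hγapp]
        have : (⟨p, hp⟩ : Fin (n - 1)) ≠ i := by
          intro h; apply hne; rw [← h]
        rw [if_neg this, mul_zero, add_zero, hA ⟨p, hp⟩]
    have hextγi : ∀ s : ℝ, ext (A + s • v) ((i : ℕ) + 1) = a ((i : ℕ) + 1) + s := by
      intro s
      rw [hexti (A + s • v) i, hγapp, if_pos rfl, mul_one, hA i]
    constructor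
    · -- diagonal entry is positive
      obtain ⟨c, hc0, hcd⟩ := hcpos ((i : ℕ) + 1) (by omega) (by omega)
      have hcd' : HasDerivAt (fun s => ‖k s - k (a (i : ℕ))‖) c (a ((i : ℕ) + 1)) := by
        simpa using hcd
      have hfun : ∀ s : ℝ, φ (A + s • v) (⟨(i : ℕ), by omega⟩ : Fin n)
          = ‖k (a ((i : ℕ) + 1) + s) - k (a (i : ℕ))‖ := by
        intro s
        rw [hφ]
        show ‖k (ext (A + s • v) (i : ℕ)) - k (ext (A + s • v) ((i : ℕ) + 1))‖ = _
        rw [hextγ s (i : ℕ) (by omega) (by omega), hextγi s]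
        exact norm_sub_rev _ _
      have hin : HasDerivAt (fun s : ℝ => a ((i : ℕ) + 1) + s) 1 0 := by
        simpa using (hasDerivAt_id (0:ℝ)).const_add (a ((i : ℕ) + 1))
      have hcd2 : HasDerivAt (fun s : ℝ => ‖k s - k (a (i : ℕ))‖)
          c ((fun s : ℝ => a ((i : ℕ) + 1) + s) 0) := by simpa using hcd'
      have h2 : HasDerivAt (fun s : ℝ => ‖k (a ((i : ℕ) + 1) + s) - k (a (i : ℕ))‖)
          (c * 1) 0 := hcd2.comp 0 hin
      have h2' : HasDerivAt (fun s : ℝ => φ (A + s • v) (⟨(i : ℕ), by omega⟩ : Fin n)) c 0 := by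
        rw [show (fun s : ℝ => φ (A + s • v) (⟨(i : ℕ), by omega⟩ : Fin n))
            = fun s : ℝ => ‖k (a ((i : ℕ) + 1) + s) - k (a (i : ℕ))‖ from funext hfun]
        simpa using h2
      have := (hcomp ⟨(i : ℕ), by omega⟩).unique h2'
      rw [this]; exact hc0
    · -- off-diagonal entries vanish
      intro j hj1 hj2
      have hconst : ∀ s : ℝ, φ (A + s • v) j = φ A j := by
        intro s
        rw [hφ, hφ]
        show ‖k (ext (A + s • v) (j : ℕ)) - k (ext (A + s • v) ((j : ℕ) + 1))‖
          = ‖k (ext A (j : ℕ)) - k (ext A ((j : ℕ) + 1))‖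
        rcases eq_or_ne ((j : ℕ) + 1) n with hjn | hjn
        · rw [hjn, hextn, hextn, hextγ s (j : ℕ) (by omega) hj2,
            hextA (j : ℕ) (by omega)]
        · rw [hextγ s (j : ℕ) (by omega) hj2, hextA (j : ℕ) (by omega),
            hextγ s ((j : ℕ) + 1) (by omega) (by omega), hextA ((j : ℕ) + 1) (by omega)]
      have h2 : HasDerivAt (fun s : ℝ => φ (A + s • v) j) 0 0 := by
        rw [show (fun s : ℝ => φ (A + s • v) j) = fun _ : ℝ => φ A j from funext hconst]
        exact hasDerivAt_const 0 _
      exact (hcomp j).unique h2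
  -- the key injectivity computation
  have hzne : ψC (φ A) ≠ 0 := by rw [← hψC]; exact hnz
  have hfeq : f = fun t => ‖ψC (φ t)‖⁻¹ • ψC (φ t) := by
    funext t; rw [hf, hψC]
  have hGdiff : HasFDerivAt (fun t => ψC (φ t)) (ψC.comp L) A :=
    (ψC.hasFDerivAt).comp A hdiff.hasFDerivAt
  have key : ∀ u : EuclideanSpace ℝ (Fin (n - 1)),
      u ⟨0, by omega⟩ = 0 → fderiv ℝ f A u = 0 → u = 0 := by
    intro u hu0 huz
    have hGd : DifferentiableAt ℝ (fun t => ψC (φ t)) A := hGdiff.differentiableAt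
    have hnr : ‖ψC (φ A)‖ ≠ 0 := norm_ne_zero_iff.mpr hzne
    have hrd : DifferentiableAt ℝ (fun t => ‖ψC (φ t)‖) A := hGd.norm ℝ hzne
    have hid : DifferentiableAt ℝ (fun t => ‖ψC (φ t)‖⁻¹) A := hrd.inv hnr
    have hfder : fderiv ℝ f A = ‖ψC (φ A)‖⁻¹ • fderiv ℝ (fun t => ψC (φ t)) A
        + (fderiv ℝ (fun t => ‖ψC (φ t)‖⁻¹) A).smulRight (ψC (φ A)) := by
      rw [hfeq]
      exact fderiv_smul hid hGd
    set d : ℝ := fderiv ℝ (fun t => ‖ψC (φ t)‖⁻¹) A u with hd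
    have h0 : (0 : EuclideanSpace ℝ (Fin n))
        = ‖ψC (φ A)‖⁻¹ • ψC (L u) + d • ψC (φ A) := by
      rw [← huz, hfder, hGdiff.fderiv]
      simp [ContinuousLinearMap.smulRight_apply]
      rfl
    -- so ψC (L u) is a multiple of ψC (φ A)
    set μ : ℝ := -(‖ψC (φ A)‖ * d) with hμ
    have hψLu : ψC (L u) = μ • ψC (φ A) := by
      have h1 : ‖ψC (φ A)‖⁻¹ • ψC (L u) = -(d • ψC (φ A)) := by
        rw [eq_comm, neg_eq_iff_add_eq_zero, add_comm]
        exact h0.symm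
      have h2 := congrArg (fun y => ‖ψC (φ A)‖ • y) h1
      simp only [smul_smul, smul_neg] at h2
      rw [mul_inv_cancel₀ hnr, one_smul] at h2
      rw [h2, hμ]
      rw [neg_smul]
    -- componentwise equation
    set α : ℝ := (∑ j, L u j) / n - μ * ((∑ j, φ A j) / n) with hα
    have heq : ∀ j : Fin n, L u j = μ * φ A j + α := by
      intro j
      have hj : ψC (L u) j = (μ • ψC (φ A)) j := by rw [hψLu]
      rw [hψCapp, PiLp.smul_apply, hψCapp, smul_eq_mul] at hj
      rw [hα]
      linear_combination hj
    -- expand L u componentwise in the basis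
    have hurep : u = ∑ i : Fin (n - 1), u i • EuclideanSpace.single i (1:ℝ) := by
      ext p
      rw [show ((∑ i : Fin (n - 1), u i • EuclideanSpace.single i (1:ℝ)) p)
          = ∑ i : Fin (n - 1), (u i • EuclideanSpace.single i (1:ℝ)) p
        from by rw [WithLp.ofLp_sum, Finset.sum_apply]]
      simp [EuclideanSpace.single_apply, mul_ite]
    have hLsum : ∀ j : Fin n,
        L u j = ∑ i : Fin (n - 1), u i * L (EuclideanSpace.single i 1) j := by
      intro j
      conv_lhs => rw [hurep]
      rw [map_sum]
      rw [show ((∑ i : Fin (n - 1), L (u i • EuclideanSpace.single i (1:ℝ))) j)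
          = ∑ i : Fin (n - 1), (L (u i • EuclideanSpace.single i (1:ℝ))) j
        from by rw [WithLp.ofLp_sum, Finset.sum_apply]]
      refine Finset.sum_congr rfl fun i _ => ?_
      rw [map_smul, PiLp.smul_apply, smul_eq_mul]
    -- row reduction to a single term
    have hrow : ∀ (mv : ℕ) (hmv : mv < n - 1),
        (∀ p (hp : p < n - 1), p + 1 = mv → u ⟨p, hp⟩ = 0) →
        (∑ i : Fin (n - 1), u i * L (EuclideanSpace.single i 1) ⟨mv, by omega⟩)
          = u ⟨mv, hmv⟩ * L (EuclideanSpace.single (⟨mv, hmv⟩ : Fin (n - 1)) 1) ⟨mv, by omega⟩ := by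
      intro mv hmv hprev
      refine Finset.sum_eq_single_of_mem (⟨mv, hmv⟩ : Fin (n - 1)) (Finset.mem_univ _) ?_
      intro i _ hne
      rcases eq_or_ne ((i : ℕ) + 1) mv with hca | hca
      · rw [show u i = 0 from by simpa using hprev (i : ℕ) i.2 hca, zero_mul]
      · rw [(hcol i).2 ⟨mv, by omega⟩ (fun h => hne (Fin.ext h.symm)) (fun h => hca h.symm), mul_zero]
    -- base row: μ ε + α = 0
    have hμα : μ * ε + α = 0 := by
      have h := (hLsum ⟨0, by omega⟩).symm.trans (heq ⟨0, by omega⟩)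
      rw [hrow 0 (by omega) (fun p hp hc => absurd hc (by omega)), hu0, zero_mul,
        hφAε ⟨0, by omega⟩ (show (0:ℕ) < n - 1 by omega)] at h
      linarith
    -- induction
    have hzero : ∀ mv (hmv : mv < n - 1), u ⟨mv, hmv⟩ = 0 := by
      intro mv
      induction mv with
      | zero => intro hmv; exact hu0
      | succ p ih =>
        intro hmv
        have hup : u ⟨p, by omega⟩ = 0 := ih (by omega)
        have h := (hLsum ⟨p + 1, by omega⟩).symm.trans (heq ⟨p + 1, by omega⟩)
        rw [hrow (p + 1) hmv (fun q hq hc => by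
            have : q = p := by omega
            subst this; exact hup),
          hφAε ⟨p + 1, by omega⟩ (show p + 1 < n - 1 from hmv)] at h
        have hcc := (hcol ⟨p + 1, hmv⟩).1
        have h' : u ⟨p + 1, hmv⟩ * L (EuclideanSpace.single (⟨p + 1, hmv⟩ : Fin (n - 1)) 1)
            ⟨p + 1, by omega⟩ = 0 := by rw [h, hμα]
        exact (mul_eq_zero.mp h').resolve_right (ne_of_gt hcc)
    ext p
    have := hzero (p : ℕ) p.2
    simpa using this
  -- conclude InjOn
  intro v hv w hw hvw
  have h1 : (v - w) ⟨0, by omega⟩ = 0 := by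
    rw [PiLp.sub_apply]
    rw [Set.mem_setOf_eq] at hv hw
    rw [hv, hw, sub_zero]
  have h2 : fderiv ℝ f A (v - w) = 0 := by
    rw [map_sub, hvw, sub_self]
  have := key (v - w) h1 h2
  exact sub_eq_zero.mp this
end

section
/- Let n ≥ 3 and let ε, δ, b₂, b₃, …, b_{n-1}, u₃, u₄, …, u_n be real numbers. Let M be the n × n real matrix whose first column is (ε, ε, …, ε, δ)ᵀ, whose second column is (1, 1, …, 1)ᵀ, and whose j-th column for 3 ≤ j ≤ n has entry b_{j-1} in row j−1, entry u_j in row j, and zeros elsewhere. Then det M = (−1)^{n+1} (δ − ε) b₂ b₃ ⋯ b_{n-1}. In particular, if δ ≠ ε and all bᵢ ≠ 0, then M is invertible. -/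
/-- The determinant computation in the proof of Lemma 4 of the paper. Let `M`
be the `n × n` matrix (`n ≥ 3`) whose first column is `(ε, …, ε, δ)ᵀ`, whose
second column is `(1, …, 1)ᵀ`, and whose `j`-th column (0-indexed
`2 ≤ j ≤ n-1`, i.e. 1-indexed `3 ≤ j+1 ≤ n`) has entry `b j` in row `j - 1`,
entry `u (j+1)` in row `j`, and zeros elsewhere. Then
`det M = (-1)^(n+1) (δ - ε) b₂ ⋯ b_{n-1}`; in particular if `δ ≠ ε` and all
`bᵢ ≠ 0` then `M` is invertible. -/
theorem det_chain_jacobian_matrix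
    (n : ℕ) (hn : 3 ≤ n)
    (ε δ : ℝ) (b u : ℕ → ℝ)
    (M : Matrix (Fin n) (Fin n) ℝ)
    (hM0 : ∀ i : Fin n, M i ⟨0, by omega⟩ = if (i : ℕ) = n - 1 then δ else ε)
    (hM1 : ∀ i : Fin n, M i ⟨1, by omega⟩ = 1)
    (hMj : ∀ j : Fin n, 2 ≤ (j : ℕ) → ∀ i : Fin n,
      M i j = if (i : ℕ) = (j : ℕ) - 1 then b (j : ℕ)
        else if (i : ℕ) = (j : ℕ) then u ((j : ℕ) + 1) else 0) :
    M.det = (-1) ^ (n + 1) * (δ - ε) * ∏ i ∈ Finset.Icc 2 (n - 1), b i ∧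
      (δ ≠ ε → (∀ i, 2 ≤ i → i ≤ n - 1 → b i ≠ 0) → IsUnit M) := by
  obtain ⟨m, rfl⟩ : ∃ m, n = m + 1 := ⟨n - 1, by omega⟩
  have hm : 2 ≤ m := by omega
  have h01 : (⟨0, by omega⟩ : Fin (m+1)) ≠ ⟨1, by omega⟩ := by
    simp [Fin.ext_iff]
  set A : Matrix (Fin (m+1)) (Fin (m+1)) ℝ :=
    Matrix.updateCol M ⟨0, by omega⟩
      (fun k => M k ⟨0, by omega⟩ + (-ε) • M k ⟨1, by omega⟩) with hAdef
  have hdetA : A.det = M.det := Matrix.det_updateCol_add_smul_self M h01 (-ε)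
  have hA0 : ∀ i : Fin (m+1), A i ⟨0, by omega⟩ = if (i : ℕ) = m then δ - ε else 0 := by
    intro i
    rw [hAdef, Matrix.updateCol_self, hM0, hM1]
    simp only [Nat.add_sub_cancel, smul_eq_mul, mul_one]
    split <;> ring
  have hAne : ∀ (i j : Fin (m+1)), j ≠ ⟨0, by omega⟩ → A i j = M i j := by
    intro i j hj
    rw [hAdef, Matrix.updateCol_ne hj]
  have key : A.det = (-1) ^ m * (δ - ε) *
      Matrix.det (A.submatrix (Fin.last m).succAbove Fin.succ) := by
    rw [Matrix.det_succ_column_zero]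
    rw [Finset.sum_eq_single (Fin.last m)]
    · have h : A (Fin.last m) (0 : Fin (m+1)) = δ - ε := by
        have := hA0 (Fin.last m)
        simpa using this
      rw [h]
      simp only [Fin.val_last]
    · intro i _ hi
      have h : A i (0 : Fin (m+1)) = 0 := by
        have := hA0 i
        have hne : (i : ℕ) ≠ m := fun h => hi (Fin.ext h)
        simpa [hne] using this
      rw [h]; ring
    · intro h; exact absurd (Finset.mem_univ _) h
  set N := A.submatrix (Fin.last m).succAbove Fin.succ with hNdef
  have hNentry : ∀ i j : Fin m, N i j = M i.castSucc j.succ := by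
    intro i j
    rw [hNdef]
    simp only [Matrix.submatrix_apply, Fin.succAbove_last]
    exact hAne _ _ (by simp [Fin.ext_iff])
  have hNdiag : ∀ i : Fin m, N i i = if (i : ℕ) = 0 then 1 else b ((i : ℕ) + 1) := by
    intro i
    rw [hNentry]
    by_cases h0 : (i : ℕ) = 0
    · have h : i.succ = (⟨1, by omega⟩ : Fin (m+1)) := by simp [Fin.ext_iff, h0]
      rw [h, hM1, if_pos h0]
    · have h2 : 2 ≤ ((i.succ : Fin (m+1)) : ℕ) := by simp; omega
      rw [hMj i.succ h2, if_pos (by simp)]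
      simp [h0]
  have hNtri : N.BlockTriangular OrderDual.toDual := by
    intro i j hij
    have hij' : (i : ℕ) < (j : ℕ) := hij
    rw [hNentry]
    have h2 : 2 ≤ ((j.succ : Fin (m+1)) : ℕ) := by simp; omega
    rw [hMj j.succ h2]
    simp only [Fin.coe_castSucc, Fin.val_succ]
    rw [if_neg (by omega), if_neg (by omega)]
  have hdetN : N.det = ∏ i ∈ Finset.Icc 2 m, b i := by
    rw [Matrix.det_of_lowerTriangular N hNtri]
    calc ∏ i : Fin m, N i i
        = ∏ i : Fin m, (fun k : ℕ => if k = 0 then 1 else b (k + 1)) (i : ℕ) :=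
          Finset.prod_congr rfl fun i _ => hNdiag i
      _ = ∏ k ∈ Finset.range m, (if k = 0 then 1 else b (k + 1)) :=
          Fin.prod_univ_eq_prod_range (fun k : ℕ => if k = 0 then 1 else b (k + 1)) m
      _ = (∏ k ∈ Finset.Ico 0 1, (if k = 0 then 1 else b (k + 1))) *
          ∏ k ∈ Finset.Ico 1 m, (if k = 0 then 1 else b (k + 1)) := by
          rw [Finset.prod_Ico_consecutive _ (by omega) (by omega), Finset.range_eq_Ico]
      _ = ∏ k ∈ Finset.Ico 1 m, b (k + 1) := by
          rw [show Finset.Ico 0 1 = {0} from rfl, Finset.prod_singleton, if_pos rfl, one_mul]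
          exact Finset.prod_congr rfl fun k hk => by
            rw [if_neg (by simp at hk; omega)]
      _ = ∏ k ∈ Finset.Ico 2 (m + 1), b k := Finset.prod_Ico_add' b 1 m 1
      _ = ∏ i ∈ Finset.Icc 2 m, b i := by rw [Finset.Ico_add_one_right_eq_Icc]
  have hdet : M.det = (-1) ^ (m + 1 + 1) * (δ - ε) * ∏ i ∈ Finset.Icc 2 (m + 1 - 1), b i := by
    rw [← hdetA, key, hdetN]
    simp only [Nat.add_sub_cancel]
    rw [show ((-1 : ℝ)) ^ (m + 1 + 1) = (-1) ^ m from by rw [pow_succ, pow_succ]; ring]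
  refine ⟨hdet, fun hδ hb => ?_⟩
  rw [Matrix.isUnit_iff_isUnit_det, hdet, isUnit_iff_ne_zero]
  apply mul_ne_zero
  apply mul_ne_zero
  · exact pow_ne_zero _ (by norm_num)
  · exact sub_ne_zero_of_ne hδ
  · rw [Finset.prod_ne_zero_iff]
    intro i hi
    simp only [Finset.mem_Icc, Nat.add_sub_cancel] at hi
    exact hb i hi.1 (by omega)
end

section
/- There exists a continuous injective map k : ℝ → ℝ³ of period 1 (restricted to [0,1)) — namely, the boundary of an isoceles triangle with two unit edges meeting at the point x₀ = k(0) at an angle less than π/3 — such that there do NOT exist parameters 0 = t₀ < t₁ < t₂ < 1 and c > 0 with ‖k(t₀) − k(t₁)‖ = ‖k(t₁) − k(t₂)‖ = ‖k(t₂) − k(t₀)‖ = c. That is, no regular 3-gon (nondegenerate equilateral triangle) inscribes this closed curve with x₀ as a vertex. -/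
noncomputable def triX (t : ℝ) : ℝ :=
  if t ≤ 1/3 then 3*t else if t ≤ 2/3 then 1 else 3 - 3*t

noncomputable def triY (t : ℝ) : ℝ :=
  if t ≤ 1/3 then 3*t/2 else if t ≤ 2/3 then 3/2 - 3*t else (3*t - 3)/2

noncomputable def tri (t : ℝ) : EuclideanSpace ℝ (Fin 3) := WithLp.toLp 2 ![triX t, triY t, 0]

lemma triX_cont : Continuous triX := by
  unfold triX
  apply Continuous.if_le
  · exact continuous_const.mul continuous_id
  · apply Continuous.if_le continuous_const
      (continuous_const.sub (continuous_const.mul continuous_id)) continuous_id continuous_const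
    intro x hx; simp only [id_eq] at hx; norm_num [hx]
  · exact continuous_id
  · exact continuous_const
  · intro x hx; norm_num [hx]

lemma triY_cont : Continuous triY := by
  unfold triY
  apply Continuous.if_le
  · exact (continuous_const.mul continuous_id).div_const _
  · apply Continuous.if_le (continuous_const.sub (continuous_const.mul continuous_id))
      (((continuous_const.mul continuous_id).sub continuous_const).div_const _)
      continuous_id continuous_const
    intro x hx; simp only [id_eq] at hx; norm_num [hx]
  · exact continuous_id
  · exact continuous_const
  · intro x hx; norm_num [hx]

lemma tri_cont : Continuous tri := by
  unfold tri
  apply (PiLp.continuous_toLp 2 _).comp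
  apply continuous_pi
  intro i
  fin_cases i
  · simpa using triX_cont
  · simpa using triY_cont
  · simpa using continuous_const

lemma tri_zero_one : tri 0 = tri 1 := by
  unfold tri triX triY; norm_num

/-- Cone property: every point of the curve satisfies x ≥ 0 and |y| ≤ x/2. -/
lemma tri_cone (t : ℝ) (ht : t ∈ Set.Ico (0:ℝ) 1) :
    0 ≤ triX t ∧ |triY t| ≤ triX t / 2 := by
  obtain ⟨h0, h1⟩ := ht
  unfold triX triY
  split_ifs with h h'
  · constructor
    · linarith
    · rw [abs_of_nonneg (by linarith)]
  · constructor
    · norm_num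
    · rw [abs_le]; constructor <;> linarith
  · constructor
    · linarith
    · rw [abs_of_nonpos (by linarith)]; linarith

lemma tri_injOn : Set.InjOn tri (Set.Ico (0:ℝ) 1) := by
  intro s hs t ht h
  have hx : triX s = triX t := by
    have := congrArg (fun v => v 0) h; simpa [tri] using this
  have hy : triY s = triY t := by
    have := congrArg (fun v => v 1) h; simpa [tri] using this
  obtain ⟨hs0, hs1⟩ := hs
  obtain ⟨ht0, ht1⟩ := ht
  unfold triX at hx
  unfold triY at hy
  split_ifs at hx hy <;> linarith

lemma cone_contradiction (a b a' b' c : ℝ) (ha : 0 ≤ a) (ha' : 0 ≤ a')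
    (hb : -(a/2) ≤ b ∧ b ≤ a/2) (hb' : -(a'/2) ≤ b' ∧ b' ≤ a'/2) (hc : 0 < c)
    (n1 : a^2 + b^2 = c^2) (n2 : (a-a')^2 + (b-b')^2 = c^2) (n3 : a'^2 + b'^2 = c^2) :
    False := by
  obtain ⟨hb1, hb2⟩ := hb
  obtain ⟨hb1', hb2'⟩ := hb'
  have key : a * a' + b * b' = c^2 / 2 := by nlinarith [n1, n2, n3]
  have hbb : b * b' ≥ -(a * a') / 4 := by
    nlinarith [mul_nonneg (by linarith : (0:ℝ) ≤ a/2 - b) (by linarith : (0:ℝ) ≤ a'/2 - b'),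
      mul_nonneg (by linarith : (0:ℝ) ≤ a/2 + b) (by linarith : (0:ℝ) ≤ a'/2 + b')]
  have ha2 : 5 * a^2 ≥ 4 * c^2 := by
    nlinarith [mul_nonneg (by linarith : (0:ℝ) ≤ a/2 - b) (by linarith : (0:ℝ) ≤ a/2 + b)]
  have ha'2 : 5 * a'^2 ≥ 4 * c^2 := by
    nlinarith [mul_nonneg (by linarith : (0:ℝ) ≤ a'/2 - b') (by linarith : (0:ℝ) ≤ a'/2 + b')]
  have haa : 5 * (a * a') ≥ 4 * c^2 := by
    nlinarith [mul_nonneg ha ha', mul_pos hc hc,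
      mul_nonneg (by linarith : (0:ℝ) ≤ 5*a^2 - 4*c^2) (by linarith : (0:ℝ) ≤ 5*a'^2 - 4*c^2)]
  nlinarith [mul_pos hc hc]

/-- The first example in Remark 6 of the paper: there is a closed curve (a
continuous injective closed loop, namely the boundary of an isoceles triangle
with two unit edges meeting at `k 0` at angle less than `π/3`) which is
inscribed by no nondegenerate equilateral triangle having `k 0` as a
vertex. -/
theorem exists_curve_no_inscribed_triangle_at_basepoint :
    ∃ k : ℝ → EuclideanSpace ℝ (Fin 3),
      Continuous k ∧ (∀ t : ℝ, k (t + 1) = k t) ∧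
      Set.InjOn k (Set.Ico (0 : ℝ) 1) ∧
      ¬ ∃ (t₁ t₂ c : ℝ), 0 < t₁ ∧ t₁ < t₂ ∧ t₂ < 1 ∧ 0 < c ∧
        ‖k 0 - k t₁‖ = c ∧ ‖k t₁ - k t₂‖ = c ∧ ‖k t₂ - k 0‖ = c := by
  refine ⟨fun t => tri (Int.fract t), ?_, ?_, ?_, ?_⟩
  · exact ContinuousOn.comp_fract'' tri_cont.continuousOn tri_zero_one
  · intro t; show tri (Int.fract (t+1)) = tri (Int.fract t); rw [Int.fract_add_one]
  · intro s hs t ht h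
    simp only at h
    rw [Int.fract_eq_self.2 hs, Int.fract_eq_self.2 ht] at h
    exact tri_injOn hs ht h
  · rintro ⟨t₁, t₂, c, ht₁, ht₁₂, ht₂, hc, h1, h2, h3⟩
    have hm1 : t₁ ∈ Set.Ico (0:ℝ) 1 := ⟨le_of_lt ht₁, by linarith⟩
    have hm2 : t₂ ∈ Set.Ico (0:ℝ) 1 := ⟨by linarith, ht₂⟩
    simp only at h1 h2 h3
    rw [Int.fract_eq_self.2 hm1] at h1 h2
    rw [Int.fract_eq_self.2 hm2] at h2 h3
    have h0 : Int.fract (0:ℝ) = 0 := by norm_num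
    rw [h0] at h1 h3
    obtain ⟨ha, hb⟩ := tri_cone t₁ hm1
    obtain ⟨ha', hb'⟩ := tri_cone t₂ hm2
    rw [abs_le] at hb hb'
    have e0 : tri 0 = 0 := by
      ext i; fin_cases i <;> simp [tri, triX, triY] <;> norm_num
    have n1 : (triX t₁)^2 + (triY t₁)^2 = c^2 := by
      have h : ‖tri 0 - tri t₁‖^2 = c^2 := by rw [h1]
      rw [e0, zero_sub, norm_neg, EuclideanSpace.norm_eq] at h
      rw [← h, Fin.sum_univ_three]
      rw [Real.sq_sqrt (by positivity)]
      simp [tri]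
    have n2 : (triX t₁ - triX t₂)^2 + (triY t₁ - triY t₂)^2 = c^2 := by
      have h : ‖tri t₁ - tri t₂‖^2 = c^2 := by rw [h2]
      rw [EuclideanSpace.norm_eq] at h
      rw [← h, Fin.sum_univ_three]
      rw [Real.sq_sqrt (by positivity)]
      simp [tri]
    have n3 : (triX t₂)^2 + (triY t₂)^2 = c^2 := by
      have h : ‖tri t₂ - tri 0‖^2 = c^2 := by rw [h3]
      rw [e0, sub_zero, EuclideanSpace.norm_eq] at h
      rw [← h, Fin.sum_univ_three]
      rw [Real.sq_sqrt (by positivity)]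
      simp [tri]
    exact cone_contradiction _ _ _ _ _ ha ha' hb hb' hc n1 n2 n3
end

section
/- Let m ≥ 2 and let k : ℝ → ℝᵐ be continuous of period 1 such that: (i) k is continuously differentiable with nonzero derivative on some open neighborhood of 0, and (ii) k(t) ≠ k(0) for all t ∈ (0,1). Then there exists an open neighborhood V of 0 in ℝ such that for every y ∈ V, condition (ii) holds with 0 replaced by y: namely k(t) ≠ k(y) for all t with t − y ∉ ℤ (equivalently, each point of V is the unique preimage of its image modulo period 1). -/
/-- The compactness claim at the start of the proof of Theorem 5 of the paper.
If `k : ℝ → ℝᵐ` (`m ≥ 2`) is continuous of period 1, C¹ with nonzero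
derivative on a neighborhood of `0`, and `k t ≠ k 0` for `t ∈ (0,1)`, then
there is an open neighborhood `V` of `0` such that every `y ∈ V` is the
unique preimage (modulo the period) of its image: `k t = k y` forces
`t = y + z` for some integer `z`. -/
theorem injectivity_propagates_to_neighborhood
    (m : ℕ) (hm : 2 ≤ m)
    (k : ℝ → EuclideanSpace ℝ (Fin m))
    (hk : Continuous k)
    (hper : ∀ t : ℝ, k (t + 1) = k t)
    (hsmooth : ∃ U : Set ℝ, IsOpen U ∧ (0 : ℝ) ∈ U ∧ ContDiffOn ℝ 1 k U ∧
      ∀ t ∈ U, deriv k t ≠ 0)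
    (hinj : ∀ t ∈ Set.Ioo (0 : ℝ) 1, k t ≠ k 0) :
    ∃ V : Set ℝ, IsOpen V ∧ (0 : ℝ) ∈ V ∧
      ∀ y ∈ V, ∀ t : ℝ, k t = k y → ∃ z : ℤ, t = y + z := by
  obtain ⟨U, hUo, hU0, hC1, hdne⟩ := hsmooth
  -- integer periodicity
  have hP : Function.Periodic k 1 := hper
  have hperZ : ∀ (t : ℝ) (n : ℤ), k (t + n) = k t := by
    intro t n
    simpa using (hP.int_mul n) t
  -- local injectivity near 0
  have hc : deriv k 0 ≠ 0 := hdne 0 hU0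
  have hcpos : (0 : ℝ) < ‖deriv k 0‖ := norm_pos_iff.mpr hc
  have hcd : ContDiffAt ℝ 1 k 0 := hC1.contDiffAt (hUo.mem_nhds hU0)
  have hstrict : HasStrictDerivAt k (deriv k 0) 0 := hcd.hasStrictDerivAt one_ne_zero
  have hlo : (fun p : ℝ × ℝ => k p.1 - k p.2 - (p.1 - p.2) • deriv k 0)
      =o[nhds ((0 : ℝ), (0 : ℝ))] fun p => p.1 - p.2 := by
    have := hstrict.isLittleO
    simpa using this
  obtain ⟨δ, hδ, hball⟩ := Metric.eventually_nhds_iff.mp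
    (hlo.def (by positivity : (0 : ℝ) < ‖deriv k 0‖ / 2))
  have hinjloc : ∀ x y : ℝ, |x| < δ → |y| < δ → k x = k y → x = y := by
    intro x y hx hy hxy
    have hd : dist ((x, y) : ℝ × ℝ) ((0 : ℝ), (0 : ℝ)) < δ := by
      rw [Prod.dist_eq]
      simp only [Real.dist_eq, sub_zero]
      exact max_lt hx hy
    have hb := hball hd
    simp only [hxy, sub_self, zero_sub, norm_neg, norm_smul, Real.norm_eq_abs] at hb
    have : |x - y| * ‖deriv k 0‖ ≤ ‖deriv k 0‖ / 2 * |x - y| := hb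
    have hxy0 : |x - y| ≤ 0 := by nlinarith [abs_nonneg (x - y)]
    have : x - y = 0 := abs_eq_zero.mp (le_antisymm hxy0 (abs_nonneg _))
    linarith
  -- choose a small ε
  set ε : ℝ := min δ 4⁻¹ with hεdef
  have hε : 0 < ε := lt_min hδ (by norm_num)
  have hεδ : ε ≤ δ := min_le_left _ _
  have hε4 : ε ≤ 4⁻¹ := min_le_right _ _
  -- positive minimum distance on the middle compact piece
  have hKc : IsCompact (Set.Icc ε (1 - ε)) := isCompact_Icc
  have hKne : (Set.Icc ε (1 - ε)).Nonempty := ⟨ε, le_refl ε, by linarith⟩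
  obtain ⟨t0, ht0, ht0min⟩ := hKc.exists_isMinOn hKne
    (Continuous.continuousOn (hk.dist continuous_const))
  have hδ0 : 0 < dist (k t0) (k 0) := by
    refine dist_pos.mpr (hinj t0 ⟨?_, ?_⟩)
    · exact lt_of_lt_of_le hε ht0.1
    · linarith [ht0.2]
  refine ⟨Set.Ioo (-ε) ε ∩ k ⁻¹' Metric.ball (k 0) (dist (k t0) (k 0)),
    (isOpen_Ioo).inter (Metric.isOpen_ball.preimage hk), ⟨⟨by linarith, hε⟩, by
      simpa using hδ0⟩, ?_⟩
  rintro y ⟨⟨hy1, hy2⟩, hyb⟩ t hty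
  have hyδ : |y| < δ := lt_of_lt_of_le (abs_lt.mpr ⟨hy1, hy2⟩) hεδ
  set s : ℝ := Int.fract t with hs
  have hs0 : 0 ≤ s := Int.fract_nonneg t
  have hs1 : s < 1 := Int.fract_lt_one t
  have hks : k s = k y := by
    rw [← hty, hs, Int.fract]
    have := hperZ (t - ⌊t⌋) ⌊t⌋
    simpa using this.symm
  rcases lt_or_ge s ε with hcase | hcase
  · -- s near 0
    have : s = y := hinjloc s y
      (lt_of_lt_of_le (by rwa [abs_of_nonneg hs0]) hεδ) hyδ hks
    refine ⟨⌊t⌋, ?_⟩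
    rw [← this]
    have hfr : t = s + ⌊t⌋ := by rw [hs, Int.fract]; ring
    linarith
  rcases lt_or_ge (1 - ε) s with hcase2 | hcase2
  · -- s near 1
    have hks' : k (s - 1) = k y := by
      rw [← hks]
      have := hperZ (s - 1) 1
      simpa using this.symm
    have habs : |s - 1| < δ := by
      rw [abs_of_nonpos (by linarith)]
      have : 1 - s < ε := by linarith
      linarith [lt_of_lt_of_le this hεδ]
    have : s - 1 = y := hinjloc (s - 1) y habs hyδ hks'
    refine ⟨⌊t⌋ + 1, ?_⟩
    have hfr : t = s + ⌊t⌋ := by rw [hs, Int.fract]; ring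
    push_cast
    linarith
  · -- middle: contradiction
    exfalso
    have hmem : s ∈ Set.Icc ε (1 - ε) := ⟨hcase, hcase2⟩
    have h1 : dist (k t0) (k 0) ≤ dist (k s) (k 0) := ht0min hmem
    have h2 : dist (k y) (k 0) < dist (k t0) (k 0) := hyb
    rw [hks] at h1
    linarith
end

section
/- Let m ≥ 2 and let k : ℝ → ℝᵐ be continuous of period 1 such that: (i) k is continuously differentiable with nonzero derivative on some open neighborhood of 0, and (ii) k(t) ≠ k(0) for all t ∈ (0,1). Then there exists r > 0 such that the set {t ∈ [−1/2, 1/2] : ‖k(t) − k(0)‖ ≤ r} is an interval (i.e., is connected) containing 0 in its interior; equivalently, the intersection of the curve with the closed ball D(r) of radius r about k(0) is a single arc of the curve. -/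
open Set

set_option maxHeartbeats 2000000 in
/-- The claim in the proof of Theorem 5 of the paper that a small ball about
the base point meets the curve in a single arc. If `k : ℝ → ℝᵐ` (`m ≥ 2`) is
continuous of period 1, C¹ with nonzero derivative on a neighborhood of `0`,
and `k t ≠ k 0` for `t ∈ (0,1)`, then there is `r > 0` such that
`{t ∈ [-1/2, 1/2] : ‖k t - k 0‖ ≤ r}` is an interval (an order-connected set)
containing `0` in its interior. -/
theorem small_ball_meets_curve_in_single_arc
    (m : ℕ) (hm : 2 ≤ m)
    (k : ℝ → EuclideanSpace ℝ (Fin m))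
    (hk : Continuous k)
    (hper : ∀ t : ℝ, k (t + 1) = k t)
    (hsmooth : ∃ U : Set ℝ, IsOpen U ∧ (0 : ℝ) ∈ U ∧ ContDiffOn ℝ 1 k U ∧
      ∀ t ∈ U, deriv k t ≠ 0)
    (hinj : ∀ t ∈ Set.Ioo (0 : ℝ) 1, k t ≠ k 0) :
    ∃ r : ℝ, 0 < r ∧
      ({t ∈ Set.Icc (-(1/2) : ℝ) (1/2) | ‖k t - k 0‖ ≤ r}).OrdConnected ∧
      (0 : ℝ) ∈ interior {t ∈ Set.Icc (-(1/2) : ℝ) (1/2) | ‖k t - k 0‖ ≤ r} := by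
  classical
  obtain ⟨U, hUo, hU0, hUc1, hUne⟩ := hsmooth
  set v : EuclideanSpace ℝ (Fin m) := deriv k 0 with hv_def
  have hv : v ≠ 0 := hUne 0 hU0
  have hvpos : (0 : ℝ) < ‖v‖ := norm_pos_iff.mpr hv
  -- continuity of the derivative on U
  have hdc : ContinuousOn (deriv k) U := hUc1.continuousOn_deriv_of_isOpen hUo le_rfl
  have hdca : ContinuousAt (deriv k) 0 := hdc.continuousAt (hUo.mem_nhds hU0)
  -- choose δ
  have hnhds : {t : ℝ | t ∈ U ∧ ‖deriv k t - v‖ ≤ ‖v‖ / 5} ∈ nhds (0 : ℝ) := by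
    have h2 : {t : ℝ | ‖deriv k t - v‖ ≤ ‖v‖ / 5} ∈ nhds (0 : ℝ) := by
      have : Metric.closedBall v (‖v‖ / 5) ∈ nhds v :=
        Metric.closedBall_mem_nhds v (by positivity)
      have := hdca.preimage_mem_nhds this
      refine Filter.mem_of_superset this ?_
      intro t ht
      simpa [Metric.mem_closedBall, dist_eq_norm] using ht
    exact Filter.inter_mem (hUo.mem_nhds hU0) h2
  obtain ⟨ε₀, hε₀, hball⟩ := Metric.mem_nhds_iff.mp hnhds
  set δ : ℝ := min (ε₀ / 2) (1 / 4) with hδ_def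
  have hδpos : 0 < δ := lt_min (by linarith) (by norm_num)
  have hδle : δ ≤ 1 / 4 := min_le_right _ _
  have hδmem : ∀ t : ℝ, |t| ≤ δ → t ∈ U ∧ ‖deriv k t - v‖ ≤ ‖v‖ / 5 := by
    intro t ht
    apply hball
    simp only [Metric.mem_ball, Real.dist_eq, sub_zero]
    have : δ ≤ ε₀ / 2 := min_le_left _ _
    linarith [abs_nonneg t]
  -- derivative exists at each point of U
  have hderiv : ∀ t ∈ U, HasDerivAt k (deriv k t) t := by
    intro t ht
    exact ((hUc1.differentiableOn one_ne_zero).differentiableAt (hUo.mem_nhds ht)).hasDerivAt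
  have habs : ∀ t ∈ Icc (-δ) δ, |t| ≤ δ := fun t ht => abs_le.mpr ⟨ht.1, ht.2⟩
  -- mean value estimate : ‖k t - k 0 - t • v‖ ≤ (‖v‖/5) * |t| on [-δ, δ]
  have hmv : ∀ t ∈ Icc (-δ) δ, ‖k t - k 0 - t • v‖ ≤ ‖v‖ / 5 * |t| := by
    intro t ht
    have h0mem : (0 : ℝ) ∈ Icc (-δ) δ := by constructor <;> simp [hδpos.le] <;> linarith
    have hmvt := Convex.norm_image_sub_le_of_norm_hasDerivWithin_le
      (f := fun s => k s - s • v) (f' := fun s => deriv k s - v) (s := Icc (-δ) δ)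
      (C := ‖v‖ / 5) ?_ ?_ (convex_Icc _ _) h0mem ht
    · have heq : k t - t • v - k 0 = k t - k 0 - t • v := by abel
      simpa [Real.norm_eq_abs, heq] using hmvt
    · intro x hx
      have hxU := (hδmem x (habs x hx)).1
      have h1 : HasDerivAt (fun s : ℝ => s • v) ((1 : ℝ) • v) x :=
        (hasDerivAt_id x).smul_const v
      have := (hderiv x hxU).sub (h1)
      simpa only [one_smul, Pi.sub_def] using this.hasDerivWithinAt
    · intro x hx
      exact (hδmem x (habs x hx)).2
  -- key inner-product estimate
  have hkey : ∀ t ∈ Icc (-δ) δ,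
      |(inner ℝ (k t - k 0) (deriv k t) : ℝ) - t * ‖v‖ ^ 2| ≤ |t| * ‖v‖ ^ 2 * (11 / 25) := by
    intro t ht
    have hU' := hδmem t (habs t ht)
    set e : EuclideanSpace ℝ (Fin m) := k t - k 0 - t • v with he
    set d : EuclideanSpace ℝ (Fin m) := deriv k t - v with hd
    have hes : k t - k 0 = t • v + e := by rw [he]; abel
    have hds : deriv k t = v + d := by rw [hd]; abel
    have hne : ‖e‖ ≤ ‖v‖ / 5 * |t| := hmv t ht
    have hnd : ‖d‖ ≤ ‖v‖ / 5 := hU'.2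
    have hexp : (inner ℝ (k t - k 0) (deriv k t) : ℝ)
        = t * ‖v‖ ^ 2 + (t * inner ℝ v d + inner ℝ e (deriv k t)) := by
      rw [hes]
      rw [inner_add_left, inner_smul_left]
      rw [hds, inner_add_right]
      simp only [RCLike.inner_apply, conj_trivial]
      rw [real_inner_self_eq_norm_sq]
      ring
    rw [hexp]
    have h1 : |t * (inner ℝ v d : ℝ)| ≤ |t| * (‖v‖ * (‖v‖ / 5)) := by
      rw [abs_mul]
      exact mul_le_mul_of_nonneg_left
        ((abs_real_inner_le_norm v d).trans
          (mul_le_mul_of_nonneg_left hnd (norm_nonneg v))) (abs_nonneg t)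
    have hdk : ‖deriv k t‖ ≤ ‖v‖ + ‖v‖ / 5 := by
      calc ‖deriv k t‖ = ‖v + d‖ := by rw [hds]
        _ ≤ ‖v‖ + ‖d‖ := norm_add_le _ _
        _ ≤ ‖v‖ + ‖v‖ / 5 := by linarith
    have h2 : |(inner ℝ e (deriv k t) : ℝ)| ≤ (‖v‖ / 5 * |t|) * (‖v‖ + ‖v‖ / 5) := by
      refine (abs_real_inner_le_norm e (deriv k t)).trans ?_
      exact mul_le_mul hne hdk (norm_nonneg _) (by positivity)
    have habs2 : |t * (inner ℝ v d : ℝ) + (inner ℝ e (deriv k t) : ℝ)|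
        ≤ |t| * (‖v‖ * (‖v‖ / 5)) + (‖v‖ / 5 * |t|) * (‖v‖ + ‖v‖ / 5) :=
      (abs_add_le _ _).trans (add_le_add h1 h2)
    have : t * ‖v‖ ^ 2 + (t * (inner ℝ v d : ℝ) + (inner ℝ e (deriv k t) : ℝ)) - t * ‖v‖ ^ 2
        = t * (inner ℝ v d : ℝ) + (inner ℝ e (deriv k t) : ℝ) := by ring
    rw [this]
    refine habs2.trans ?_
    have hto : (0 : ℝ) ≤ |t| := abs_nonneg t
    nlinarith [hvpos, sq_nonneg ‖v‖]
  -- the squared distance function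
  set f : ℝ → ℝ := fun t => (inner ℝ (k t - k 0) (k t - k 0) : ℝ) with hf_def
  have hfval : ∀ t, f t = ‖k t - k 0‖ ^ 2 := fun t => real_inner_self_eq_norm_sq _
  have hfc : Continuous f := (hk.sub continuous_const).inner (hk.sub continuous_const)
  have hfd : ∀ t ∈ U, HasDerivAt f (2 * (inner ℝ (k t - k 0) (deriv k t) : ℝ)) t := by
    intro t ht
    have h1 : HasDerivAt (fun s => k s - k 0) (deriv k t) t := (hderiv t ht).sub_const _
    have := h1.inner ℝ h1
    refine this.congr_deriv ?_
    rw [real_inner_comm]; ring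
  -- monotone on [0, δ]
  have hmono : StrictMonoOn f (Icc 0 δ) := by
    apply strictMonoOn_of_hasDerivWithinAt_pos (convex_Icc _ _) hfc.continuousOn
      (f' := fun t => 2 * (inner ℝ (k t - k 0) (deriv k t) : ℝ))
    · intro x hx
      rw [interior_Icc] at hx
      have hxI : x ∈ Icc (-δ) δ := ⟨by linarith [hx.1], hx.2.le⟩
      exact (hfd x (hδmem x (habs x hxI)).1).hasDerivWithinAt
    · intro x hx
      rw [interior_Icc] at hx
      have hxI : x ∈ Icc (-δ) δ := ⟨by linarith [hx.1], hx.2.le⟩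
      have := hkey x hxI
      have hx0 : 0 < x := hx.1
      rw [abs_of_pos hx0] at this
      have := abs_le.mp this
      nlinarith [mul_pos hx0 (pow_pos hvpos 2), this.1]
  -- antitone on [-δ, 0]
  have hanti : StrictAntiOn f (Icc (-δ) 0) := by
    apply strictAntiOn_of_hasDerivWithinAt_neg (convex_Icc _ _) hfc.continuousOn
      (f' := fun t => 2 * (inner ℝ (k t - k 0) (deriv k t) : ℝ))
    · intro x hx
      rw [interior_Icc] at hx
      have hxI : x ∈ Icc (-δ) δ := ⟨hx.1.le, by linarith [hx.2, hδpos]⟩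
      exact (hfd x (hδmem x (habs x hxI)).1).hasDerivWithinAt
    · intro x hx
      rw [interior_Icc] at hx
      have hxI : x ∈ Icc (-δ) δ := ⟨hx.1.le, by linarith [hx.2, hδpos]⟩
      have := hkey x hxI
      have hx0 : x < 0 := hx.2
      rw [abs_of_neg hx0] at this
      have := abs_le.mp this
      nlinarith [mul_pos (neg_pos.mpr hx0) (pow_pos hvpos 2), this.2]
  -- minimum of distance away from (-δ, δ)
  set K : Set ℝ := Icc (-(1/2) : ℝ) (1/2) ∩ (Ioo (-δ) δ)ᶜ with hK_def
  have hKc : IsCompact K := isCompact_Icc.inter_right isOpen_Ioo.isClosed_compl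
  have hKne : K.Nonempty := by
    refine ⟨1/2, ?_, ?_⟩
    · constructor <;> norm_num
    · simp only [mem_compl_iff, mem_Ioo, not_and, not_lt]
      intro _; linarith
  obtain ⟨t₀, ht₀K, ht₀min'⟩ := hKc.exists_isMinOn hKne
    ((hk.sub continuous_const).norm.continuousOn)
  have ht₀min : ∀ w ∈ K, ‖k t₀ - k 0‖ ≤ ‖k w - k 0‖ := isMinOn_iff.mp ht₀min'
  set ε : ℝ := ‖k t₀ - k 0‖ with hε_def
  have hεpos : 0 < ε := by
    have ht₀1 : t₀ ∈ Icc (-(1/2) : ℝ) (1/2) := ht₀K.1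
    have ht₀2 : t₀ ∉ Ioo (-δ) δ := ht₀K.2
    have hcase : t₀ ≤ -δ ∨ δ ≤ t₀ := by
      by_contra h
      push_neg at h
      exact ht₀2 h
    have hne0 : k t₀ ≠ k 0 := by
      rcases hcase with h | h
      · have heq : k t₀ = k (t₀ + 1) := (hper t₀).symm
        rw [heq]
        exact hinj (t₀ + 1) ⟨by linarith [ht₀1.1], by linarith [hδpos]⟩
      · exact hinj t₀ ⟨by linarith [hδpos], by linarith [ht₀1.2]⟩
    rw [hε_def]
    exact norm_sub_pos_iff.mpr hne0
  refine ⟨ε / 2, by positivity, ?_, ?_⟩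
  · -- OrdConnected
    constructor
    intro x hx y hy z hz
    simp only [mem_sep_iff] at hx hy ⊢
    have hzI : z ∈ Icc (-(1/2) : ℝ) (1/2) := ⟨le_trans hx.1.1 hz.1, le_trans hz.2 hy.1.2⟩
    refine ⟨hzI, ?_⟩
    -- points of the set lie in (-δ, δ)
    have hsmall : ∀ w : ℝ, w ∈ Icc (-(1/2) : ℝ) (1/2) → ‖k w - k 0‖ ≤ ε / 2 →
        w ∈ Ioo (-δ) δ := by
      intro w hw1 hw2
      by_contra hw3
      have := ht₀min w ⟨hw1, hw3⟩
      linarith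
    have hxδ := hsmall x hx.1 hx.2
    have hyδ := hsmall y hy.1 hy.2
    rcases lt_trichotomy z 0 with hz0 | hz0 | hz0
    · -- z < 0, use antitone on [-δ, 0], x ≤ z
      have hxz : x ≤ z := hz.1
      have hxmem : x ∈ Icc (-δ) (0:ℝ) := ⟨hxδ.1.le, by linarith⟩
      have hzmem : z ∈ Icc (-δ) (0:ℝ) := ⟨by linarith [hxδ.1], hz0.le⟩
      have hfz : f z ≤ f x := by
        rcases eq_or_lt_of_le hxz with h | h
        · rw [h]
        · exact (hanti hxmem hzmem h).le
      rw [hfval, hfval] at hfz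
      have hx2 : ‖k x - k 0‖ ≤ ε / 2 := hx.2
      nlinarith [norm_nonneg (k z - k 0), norm_nonneg (k x - k 0), hεpos]
    · simp [hz0, hεpos.le]; positivity
    · -- z > 0, use monotone on [0, δ], z ≤ y
      have hzy : z ≤ y := hz.2
      have hymem : y ∈ Icc (0:ℝ) δ := ⟨by linarith, hyδ.2.le⟩
      have hzmem : z ∈ Icc (0:ℝ) δ := ⟨hz0.le, by linarith [hyδ.2]⟩
      have hfz : f z ≤ f y := by
        rcases eq_or_lt_of_le hzy with h | h
        · rw [h]
        · exact (hmono hzmem hymem h).le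
      rw [hfval, hfval] at hfz
      have hy2 : ‖k y - k 0‖ ≤ ε / 2 := hy.2
      nlinarith [norm_nonneg (k z - k 0), norm_nonneg (k y - k 0), hεpos]
  · -- 0 in interior
    have hVo : IsOpen ({t : ℝ | ‖k t - k 0‖ < ε / 2} ∩ Ioo (-(1/2) : ℝ) (1/2)) :=
      (isOpen_lt (hk.sub continuous_const).norm continuous_const).inter isOpen_Ioo
    have hsub : ({t : ℝ | ‖k t - k 0‖ < ε / 2} ∩ Ioo (-(1/2) : ℝ) (1/2)) ⊆
        {t ∈ Icc (-(1/2) : ℝ) (1/2) | ‖k t - k 0‖ ≤ ε / 2} := by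
      intro t ht
      exact ⟨⟨ht.2.1.le, ht.2.2.le⟩, ht.1.le⟩
    apply interior_maximal hsub hVo
    constructor
    · simp only [mem_setOf_eq, sub_self, norm_zero]
      positivity
    · constructor <;> norm_num
end
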